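/- arXiv:2111.09060 — 5 statements merged into one kernel-verified Lean document; each statement's English description precedes it below -/
import Mathlib

section
/- Let q be a prime power, n a positive integer with gcd(n,q)=1, and α a primitive n-th root of unity in an extension field of F_q. Let C and D be cyclic codes of length n over F_q with generating sets I₁ and I₂ respectively. Then the star product C⋆D is a cyclic code whose generator polynomial is g_{C⋆D}(x) = (xⁿ − 1)/∏_{j ∈ I₁+I₂}(x − α^j); equivalently, the generating set of C⋆D is the Minkowski sum I₁ + I₂ = {i₁ + i₂ mod n : i₁ ∈ I₁, i₂ ∈ I₂}. -/
open Polynomial Pointwise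

noncomputable section



/-- The `F`-linear map sending a word `(c₀,…,c_{n-1})` to the polynomial `∑ cᵢ xⁱ`. -/
def wordToPoly (F : Type*) [Field F] (n : ℕ) : (Fin n → F) →ₗ[F] Polynomial F where
  toFun c := ∑ i : Fin n, Polynomial.C (c i) * Polynomial.X ^ (i : ℕ)
  map_add' a b := by
    simp [map_add, add_mul, Finset.sum_add_distrib]
  map_smul' r a := by
    simp [Finset.smul_sum, Polynomial.smul_eq_C_mul, map_mul, mul_assoc]

/-- The cyclic code of length `n` over `F` with generator polynomial `g`:
all words whose associated polynomial is a multiple of `g` in `F[x]`. -/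
def cyclicCode (F : Type*) [Field F] (n : ℕ) (g : Polynomial F) :
    Submodule F (Fin n → F) :=
  Submodule.comap (wordToPoly F n) (Submodule.restrictScalars F (Ideal.span {g}))

/-- The defining set `J = {j ∈ ℤ/nℤ : g(αʲ) = 0}` of a cyclic code with generator `g`,
w.r.t. a fixed primitive `n`-th root of unity `α` in an extension `K` of `F`. -/
def definingSet {F K : Type*} [Field F] [Field K] [Algebra F K] (n : ℕ) [NeZero n]
    (g : Polynomial F) (α : K) : Set (ZMod n) :=
  {j | Polynomial.aeval (α ^ j.val) g = 0}

/-- The generating set `I = {j ∈ ℤ/nℤ : g(αʲ) ≠ 0}` of a cyclic code with generator `g`. -/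
def generatingSet {F K : Type*} [Field F] [Field K] [Algebra F K] (n : ℕ) [NeZero n]
    (g : Polynomial F) (α : K) : Set (ZMod n) :=
  {j | Polynomial.aeval (α ^ j.val) g ≠ 0}

/-- The star (Schur) product of two linear codes: the span of all componentwise products. -/
def starProd {F : Type*} [Field F] {ι : Type*} (C D : Submodule F (ι → F)) :
    Submodule F (ι → F) :=
  Submodule.span F {v | ∃ c ∈ C, ∃ d ∈ D, v = fun i => c i * d i}


namespace StarAux

variable {F K : Type*} [Field F] [Field K] [Algebra F K]

def om (n : ℕ) [NeZero n] (α : K) (j : ZMod n) : K := α ^ j.val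

variable {n : ℕ} [NeZero n] {α : K}

lemma om_natCast (hα : IsPrimitiveRoot α n) (m : ℕ) :
    om n α (m : ZMod n) = α ^ m := by
  rw [om, ZMod.val_natCast]
  conv_rhs => rw [← Nat.div_add_mod m n, pow_add, pow_mul, hα.pow_eq_one, one_pow, one_mul]

lemma om_zero : om n α 0 = 1 := by simp [om]

lemma om_add (hα : IsPrimitiveRoot α n) (a b : ZMod n) :
    om n α (a + b) = om n α a * om n α b := by
  have h : a + b = ((a.val + b.val : ℕ) : ZMod n) := by
    push_cast
    simp [ZMod.natCast_val, ZMod.cast_id]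
  rw [h, om_natCast hα, pow_add]; rfl

lemma om_pow (hα : IsPrimitiveRoot α n) (a : ZMod n) (t : ℕ) :
    om n α a ^ t = om n α (a * (t : ZMod n)) := by
  have h : a * (t : ZMod n) = ((a.val * t : ℕ) : ZMod n) := by
    push_cast
    simp [ZMod.natCast_val, ZMod.cast_id]
  rw [h, om_natCast hα, pow_mul]; rfl

lemma om_pow_n (hα : IsPrimitiveRoot α n) (a : ZMod n) : om n α a ^ n = 1 := by
  rw [om, ← pow_mul, mul_comm, pow_mul, hα.pow_eq_one, one_pow]

lemma om_inj (hα : IsPrimitiveRoot α n) : Function.Injective (om n α) := by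
  intro a b h
  exact ZMod.val_injective n (hα.pow_inj (ZMod.val_lt a) (ZMod.val_lt b) h)

lemma om_ne_zero (hα : IsPrimitiveRoot α n) (a : ZMod n) : om n α a ≠ 0 :=
  pow_ne_zero _ (hα.ne_zero (NeZero.ne n))

lemma sum_om (hα : IsPrimitiveRoot α n) (m : ZMod n) :
    ∑ i : Fin n, om n α (m * ((i : ℕ) : ZMod n)) = if m = 0 then (n : K) else 0 := by
  have h1 : ∀ i : Fin n, om n α (m * ((i : ℕ) : ZMod n)) = om n α m ^ (i : ℕ) :=
    fun i => (om_pow hα m i).symm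
  simp_rw [h1]
  rw [Fin.sum_univ_eq_sum_range (fun i => om n α m ^ i) n]
  split_ifs with h
  · subst h; simp [om_zero]
  · have hne : om n α m ≠ 1 := by
      intro he
      exact h (om_inj hα (by rw [he, om_zero]))
    rw [geom_sum_eq hne, om_pow_n hα, sub_self, zero_div]


variable (n : ℕ) [NeZero n] (α : K)

/-- The evaluation (Fourier) transform of a word with entries in `K`. -/
def tr (v : Fin n → K) (j : ZMod n) : K :=
  ∑ i : Fin n, v i * om n α (j * ((i : ℕ) : ZMod n))

/-- Coercion of a word over `F` to a word over `K`. -/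
def iv (c : Fin n → F) : Fin n → K := fun i => algebraMap F K (c i)

variable {n α}

lemma tr_iv (hα : IsPrimitiveRoot α n) (c : Fin n → F) (j : ZMod n) :
    tr n α (iv n c) j = aeval (om n α j) (wordToPoly F n c) := by
  rw [wordToPoly]
  simp only [LinearMap.coe_mk, AddHom.coe_mk, map_sum, map_mul, aeval_C, map_pow, aeval_X]
  rw [tr]
  refine Finset.sum_congr rfl fun i _ => ?_
  simp [iv, om_pow hα]


def u (n : ℕ) [NeZero n] (α : K) (k : ZMod n) : Fin n → K :=
  fun i => om n α (-(k * ((i : ℕ) : ZMod n)))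

lemma natCast_fin_inj {i i' : Fin n} (h : ((i : ℕ) : ZMod n) = ((i' : ℕ) : ZMod n)) :
    i = i' := by
  apply Fin.ext
  have h2 := congrArg ZMod.val h
  rwa [ZMod.val_natCast_of_lt i.isLt, ZMod.val_natCast_of_lt i'.isLt] at h2

lemma tr_u (hα : IsPrimitiveRoot α n) (k j : ZMod n) :
    tr n α (u n α k) j = if j = k then (n : K) else 0 := by
  have h : ∀ i : Fin n, u n α k i * om n α (j * ((i : ℕ) : ZMod n))
      = om n α ((j - k) * ((i : ℕ) : ZMod n)) := by
    intro i
    rw [u, ← om_add hα]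
    congr 1
    ring
  rw [tr]
  simp_rw [h]
  rw [sum_om hα]
  simp [sub_eq_zero]

lemma tr_sum_smul {ι : Type*} (s : Finset ι) (f : ι → K) (v : ι → Fin n → K) (j : ZMod n) :
    tr n α (∑ t ∈ s, f t • v t) j = ∑ t ∈ s, f t * tr n α (v t) j := by
  simp only [tr, Finset.sum_apply, Pi.smul_apply, smul_eq_mul, Finset.sum_mul, Finset.mul_sum]
  rw [Finset.sum_comm]
  exact Finset.sum_congr rfl fun t _ => Finset.sum_congr rfl fun i _ => by ring

lemma tr_smul (x : K) (v : Fin n → K) (j : ZMod n) :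
    tr n α (x • v) j = x * tr n α v j := by
  simp only [tr, Pi.smul_apply, smul_eq_mul, Finset.mul_sum]
  exact Finset.sum_congr rfl fun i _ => by ring

lemma tr_injective (hα : IsPrimitiveRoot α n) (hn' : (n : K) ≠ 0) {v w : Fin n → K}
    (h : ∀ j, tr n α v j = tr n α w j) : v = w := by
  have key : ∀ x : Fin n → K, ∀ i : Fin n,
      ∑ j : Fin n, tr n α x ((j : ℕ) : ZMod n) * om n α (-(((j : ℕ) : ZMod n) * ((i : ℕ) : ZMod n)))
        = (n : K) * x i := by
    intro x i
    have expand : ∀ j : Fin n,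
        tr n α x ((j : ℕ) : ZMod n) * om n α (-(((j : ℕ) : ZMod n) * ((i : ℕ) : ZMod n)))
          = ∑ i' : Fin n, x i' * om n α ((((i' : ℕ) : ZMod n) - ((i : ℕ) : ZMod n)) * ((j : ℕ) : ZMod n)) := by
      intro j
      rw [tr, Finset.sum_mul]
      refine Finset.sum_congr rfl fun i' _ => ?_
      rw [mul_assoc, ← om_add hα]
      congr 1
      ring
    simp_rw [expand]
    rw [Finset.sum_comm]
    have inner : ∀ i' : Fin n,
        ∑ j : Fin n, x i' * om n α ((((i' : ℕ) : ZMod n) - ((i : ℕ) : ZMod n)) * ((j : ℕ) : ZMod n))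
          = x i' * (if (((i' : ℕ) : ZMod n) - ((i : ℕ) : ZMod n)) = 0 then (n : K) else 0) := by
      intro i'
      rw [← Finset.mul_sum, sum_om hα]
    simp_rw [inner]
    rw [Finset.sum_eq_single_of_mem i (Finset.mem_univ i)]
    · simp [mul_comm]
    · intro i' _ hne
      have : ¬ ((((i' : ℕ) : ZMod n) - ((i : ℕ) : ZMod n)) = 0) := by
        intro hz
        exact hne (natCast_fin_inj (by rwa [sub_eq_zero] at hz))
      simp [this]
  funext i
  have h1 := key v i
  have h2 := key w i
  simp_rw [h] at h1
  rw [h1] at h2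
  exact mul_left_cancel₀ hn' h2

lemma tr_mul (hα : IsPrimitiveRoot α n) (v w : Fin n → K) (j : ZMod n) :
    (n : K) * tr n α (fun i => v i * w i) j
      = ∑ k : Fin n, tr n α v ((k : ℕ) : ZMod n) * tr n α w (j - ((k : ℕ) : ZMod n)) := by
  have expand : ∀ k : Fin n,
      tr n α v ((k : ℕ) : ZMod n) * tr n α w (j - ((k : ℕ) : ZMod n))
        = ∑ i : Fin n, ∑ i' : Fin n, v i * w i' * om n α (j * ((i' : ℕ) : ZMod n))
            * om n α ((((i : ℕ) : ZMod n) - ((i' : ℕ) : ZMod n)) * ((k : ℕ) : ZMod n)) := by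
    intro k
    rw [tr, tr, Finset.sum_mul_sum]
    refine Finset.sum_congr rfl fun i _ => Finset.sum_congr rfl fun i' _ => ?_
    have : v i * om n α (((k : ℕ) : ZMod n) * ((i : ℕ) : ZMod n))
        * (w i' * om n α ((j - ((k : ℕ) : ZMod n)) * ((i' : ℕ) : ZMod n)))
        = v i * w i' * om n α (((k : ℕ) : ZMod n) * ((i : ℕ) : ZMod n)
            + (j - ((k : ℕ) : ZMod n)) * ((i' : ℕ) : ZMod n)) := by
      rw [om_add hα]; ring
    have h2 : om n α (((k : ℕ) : ZMod n) * ((i : ℕ) : ZMod n)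
        + (j - ((k : ℕ) : ZMod n)) * ((i' : ℕ) : ZMod n))
        = om n α (j * ((i' : ℕ) : ZMod n))
          * om n α ((((i : ℕ) : ZMod n) - ((i' : ℕ) : ZMod n)) * ((k : ℕ) : ZMod n)) := by
      rw [← om_add hα]
      congr 1
      ring
    rw [this, h2]
    ring
  rw [Finset.sum_congr rfl fun k _ => expand k]
  rw [Finset.sum_comm]
  have inner1 : ∀ i : Fin n,
      ∑ k : Fin n, ∑ i' : Fin n, v i * w i' * om n α (j * ((i' : ℕ) : ZMod n))
          * om n α ((((i : ℕ) : ZMod n) - ((i' : ℕ) : ZMod n)) * ((k : ℕ) : ZMod n))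
        = v i * w i * om n α (j * ((i : ℕ) : ZMod n)) * (n : K) := by
    intro i
    rw [Finset.sum_comm]
    have inner2 : ∀ i' : Fin n,
        ∑ k : Fin n, v i * w i' * om n α (j * ((i' : ℕ) : ZMod n))
            * om n α ((((i : ℕ) : ZMod n) - ((i' : ℕ) : ZMod n)) * ((k : ℕ) : ZMod n))
          = v i * w i' * om n α (j * ((i' : ℕ) : ZMod n))
            * (if (((i : ℕ) : ZMod n) - ((i' : ℕ) : ZMod n)) = 0 then (n : K) else 0) := by
      intro i'
      rw [← Finset.mul_sum, sum_om hα]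
    simp_rw [inner2]
    rw [Finset.sum_eq_single_of_mem i (Finset.mem_univ i)]
    · simp
    · intro i' _ hne
      have : ¬ ((((i : ℕ) : ZMod n) - ((i' : ℕ) : ZMod n)) = 0) := by
        intro hz
        rw [sub_eq_zero] at hz
        exact hne (natCast_fin_inj hz.symm)
      simp [this]
  rw [Finset.sum_congr rfl fun i _ => inner1 i, tr, Finset.mul_sum]
  exact Finset.sum_congr rfl fun i _ => by ring

lemma xn_sub_one_ne_zero : ((X : K[X]) ^ n - 1) ≠ 0 := by
  have := X_pow_sub_C_ne_zero (Nat.pos_of_ne_zero (NeZero.ne n)) (1 : K)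
  simpa using this

lemma prod_univ_om (hα : IsPrimitiveRoot α n) :
    ∏ j : ZMod n, (X - C (om n α j)) = (X : K[X]) ^ n - 1 := by
  classical
  have hpos : 0 < n := Nat.pos_of_ne_zero (NeZero.ne n)
  have himg : Finset.univ.image (om n α) = Polynomial.nthRootsFinset n (1 : K) := by
    apply Finset.eq_of_subset_of_card_le
    · intro x hx
      obtain ⟨j, _, rfl⟩ := Finset.mem_image.mp hx
      exact (Polynomial.mem_nthRootsFinset hpos (1 : K)).mpr (om_pow_n hα j)
    · rw [hα.card_nthRootsFinset, Finset.card_image_of_injective _ (om_inj hα),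
        Finset.card_univ, ZMod.card]
  rw [X_pow_sub_one_eq_prod hpos hα, ← himg,
    Finset.prod_image (fun j _ j' _ h => om_inj hα h)]

lemma wordToPoly_coeff (c : Fin n → F) (i : Fin n) :
    (wordToPoly F n c).coeff (i : ℕ) = c i := by
  rw [wordToPoly]
  simp only [LinearMap.coe_mk, AddHom.coe_mk, finset_sum_coeff, coeff_C_mul, coeff_X_pow]
  rw [Finset.sum_eq_single_of_mem i (Finset.mem_univ i)]
  · simp
  · intro i' _ hne
    have hn2 : ¬ ((i : ℕ) = (i' : ℕ)) := fun h => hne (Fin.ext h.symm)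
    simp [hn2]

lemma wordToPoly_degree_lt (c : Fin n → F) (d : ℕ) (h : ∀ i : Fin n, d ≤ (i : ℕ) → c i = 0) :
    (wordToPoly F n c).degree < d := by
  rw [wordToPoly]
  simp only [LinearMap.coe_mk, AddHom.coe_mk]
  refine lt_of_le_of_lt (degree_sum_le _ _) ?_
  rw [Finset.sup_lt_iff (by exact WithBot.bot_lt_coe d)]
  intro i _
  by_cases hc : c i = 0
  · rw [hc, map_zero, zero_mul, degree_zero]
    exact WithBot.bot_lt_coe d
  · have hid : (i : ℕ) < d := by
      by_contra hge
      exact hc (h i (le_of_not_gt hge))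
    refine lt_of_le_of_lt (degree_C_mul_X_pow_le _ _) ?_
    exact_mod_cast hid

lemma wordToPoly_degree (c : Fin n → F) : (wordToPoly F n c).degree < n :=
  wordToPoly_degree_lt c n (fun i hi => absurd i.isLt (not_lt.mpr hi))

lemma wordToPoly_of_coeff {p : F[X]} (hp : p.degree < n) :
    wordToPoly F n (fun i => p.coeff (i : ℕ)) = p := by
  have hnd : p.natDegree < n := by
    rcases eq_or_ne p 0 with rfl | h0
    · simpa using Nat.pos_of_ne_zero (NeZero.ne n)
    · rwa [degree_eq_natDegree h0, Nat.cast_lt] at hp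
  rw [wordToPoly]
  simp only [LinearMap.coe_mk, AddHom.coe_mk]
  conv_rhs => rw [p.as_sum_range' n hnd]
  rw [← Fin.sum_univ_eq_sum_range (fun i => monomial i (p.coeff i)) n]
  exact Finset.sum_congr rfl fun i _ => by rw [C_mul_X_pow_eq_monomial]

lemma mem_cyclicCode_iff_dvd (h : F[X]) (c : Fin n → F) :
    c ∈ cyclicCode F n h ↔ h ∣ wordToPoly F n c := by
  simp [cyclicCode, Ideal.mem_span_singleton]

open Classical in
lemma map_eq_prod (hα : IsPrimitiveRoot α n) {h : F[X]} (hm : h.Monic) (hd : h ∣ X ^ n - 1) :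
    h.map (algebraMap F K)
      = ∏ j ∈ Finset.univ.filter (fun j : ZMod n => aeval (om n α j) h = 0),
          (X - C (om n α j)) := by
  set T := Finset.univ.filter (fun j : ZMod n => aeval (om n α j) h = 0) with hT
  set p := h.map (algebraMap F K) with hp
  have hpm : p.Monic := hm.map _
  have hpd : p ∣ ((X : K[X]) ^ n - 1) := by
    have := Polynomial.map_dvd (algebraMap F K) hd
    simpa [Polynomial.map_sub, Polynomial.map_pow] using this
  have hsplit : p.Splits := by
    refine Splits.of_dvd ?_ xn_sub_one_ne_zero hpd
    rw [← prod_univ_om hα]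
    exact Splits.prod fun j _ => Splits.X_sub_C _
  have hpi : ∏ b ∈ Finset.univ.image (om n α), (X - C b)
      = ∏ j : ZMod n, (X - C (om n α j)) :=
    Finset.prod_image (fun j _ j' _ hh => om_inj hα hh)
  have hxr : ((X : K[X]) ^ n - 1).roots = (Finset.univ.image (om n α)).val := by
    rw [← prod_univ_om hα, ← hpi]
    exact roots_prod_X_sub_C _
  have hrle : p.roots ≤ ((X : K[X]) ^ n - 1).roots :=
    roots.le_of_dvd xn_sub_one_ne_zero hpd
  have hnodup : p.roots.Nodup := by
    refine Multiset.nodup_of_le hrle ?_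
    rw [hxr]
    exact (Finset.univ.image (om n α)).nodup
  have hne0 : p ≠ 0 := hpm.ne_zero
  have hroots : p.roots = T.val.map (om n α) := by
    rw [Multiset.Nodup.ext hnodup (Multiset.Nodup.map (om_inj hα) T.nodup)]
    intro r
    constructor
    · intro hr
      have hr2 : r ∈ ((X : K[X]) ^ n - 1).roots := Multiset.mem_of_le hrle hr
      rw [hxr, Finset.mem_val, Finset.mem_image] at hr2
      obtain ⟨j, -, rfl⟩ := hr2
      have hev : aeval (om n α j) h = 0 := by
        have := (mem_roots'.mp hr).2
        rwa [IsRoot, hp, eval_map, ← aeval_def] at this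
      exact Multiset.mem_map.mpr ⟨j, Finset.mem_val.mpr (by simp [hT, hev]), rfl⟩
    · intro hr
      obtain ⟨j, hj, rfl⟩ := Multiset.mem_map.mp hr
      rw [Finset.mem_val, hT, Finset.mem_filter] at hj
      refine mem_roots'.mpr ⟨hne0, ?_⟩
      rw [IsRoot, hp, eval_map, ← aeval_def]
      exact hj.2
  have hfact := hsplit.eq_prod_roots_of_monic hpm
  rw [hfact, hroots, Multiset.map_map, Finset.prod_eq_multiset_prod]
  rfl

lemma aeval_vanish_of_mem (h : F[X]) (c : Fin n → F) (hc : c ∈ cyclicCode F n h)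
    (j : ZMod n) (hj : aeval (om n α j) h = 0) :
    aeval (om n α j) (wordToPoly F n c) = 0 := by
  obtain ⟨r, hr⟩ := (mem_cyclicCode_iff_dvd h c).mp hc
  rw [hr, map_mul, hj, zero_mul]

open Classical in
lemma mem_cyclicCode_iff_vanish (hα : IsPrimitiveRoot α n) {h : F[X]} (hm : h.Monic)
    (hd : h ∣ X ^ n - 1) (c : Fin n → F) :
    c ∈ cyclicCode F n h ↔
      ∀ j : ZMod n, aeval (om n α j) h = 0 → aeval (om n α j) (wordToPoly F n c) = 0 := by
  constructor
  · exact fun hc j hj => aeval_vanish_of_mem h c hc j hj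
  · intro hv
    rw [mem_cyclicCode_iff_dvd, ← map_dvd_map' (algebraMap F K), map_eq_prod hα hm hd]
    set T := Finset.univ.filter (fun j : ZMod n => aeval (om n α j) h = 0) with hT
    set f := (wordToPoly F n c).map (algebraMap F K) with hf
    rcases eq_or_ne f 0 with hf0 | hf0
    · rw [hf0]
      exact dvd_zero _
    · have hM : (T.val.map (om n α)) ≤ f.roots := by
        rw [Multiset.le_iff_subset (Multiset.Nodup.map (om_inj hα) T.nodup)]
        intro r hr
        obtain ⟨j, hj, rfl⟩ := Multiset.mem_map.mp hr
        rw [Finset.mem_val, hT, Finset.mem_filter] at hj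
        refine mem_roots'.mpr ⟨hf0, ?_⟩
        rw [IsRoot, hf, eval_map, ← aeval_def]
        exact hv j hj.2
      calc ∏ j ∈ T, (X - C (om n α j))
          = ((T.val.map (om n α)).map (fun r => X - C r)).prod := by
            rw [Multiset.map_map, Finset.prod_eq_multiset_prod]; rfl
        _ ∣ (f.roots.map (fun r => X - C r)).prod :=
            Multiset.prod_dvd_prod_of_le (Multiset.map_le_map hM)
        _ ∣ f := prod_multiset_X_sub_C_dvd f

open Classical in
lemma natDegree_eq_card_filter (hα : IsPrimitiveRoot α n) {h : F[X]} (hm : h.Monic)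
    (hd : h ∣ X ^ n - 1) :
    h.natDegree
      = (Finset.univ.filter (fun j : ZMod n => aeval (om n α j) h = 0)).card := by
  have h1 : (h.map (algebraMap F K)).natDegree = h.natDegree := hm.natDegree_map _
  rw [← h1, map_eq_prod hα hm hd, natDegree_prod _ _ (fun j _ => X_sub_C_ne_zero _)]
  simp [natDegree_X_sub_C]

lemma zero_of_wordToPoly_zero {c : Fin n → F} (hc : wordToPoly F n c = 0) : c = 0 := by
  funext i
  have := wordToPoly_coeff c i
  rw [hc, coeff_zero] at this
  exact this.symm

lemma finrank_cyclicCode_le (h : F[X]) (hm : h.Monic) :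
    Module.finrank F (cyclicCode F n h) ≤ n - h.natDegree := by
  set d := h.natDegree with hdd
  set L : (Fin n → F) →ₗ[F] (Fin (n - d) → F) :=
    LinearMap.funLeft F F (fun t : Fin (n - d) => (⟨d + (t : ℕ), by omega⟩ : Fin n)) with hL
  have hinj : Function.Injective (L.comp (cyclicCode F n h).subtype) := by
    rw [← LinearMap.ker_eq_bot, LinearMap.ker_eq_bot']
    intro x hx
    have hcoords : ∀ i : Fin n, d ≤ (i : ℕ) → (x : Fin n → F) i = 0 := by
      intro i hi
      have ht : (i : ℕ) - d < n - d := by omega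
      have := congrFun hx ⟨(i : ℕ) - d, ht⟩
      simpa [hL, LinearMap.funLeft, Fin.ext_iff, Nat.add_sub_cancel' hi] using this
    have hdeg : (wordToPoly F n (x : Fin n → F)).degree < h.degree := by
      rw [degree_eq_natDegree hm.ne_zero]
      exact wordToPoly_degree_lt _ d hcoords
    have hdvd : h ∣ wordToPoly F n (x : Fin n → F) :=
      (mem_cyclicCode_iff_dvd h _).mp x.2
    have hz : wordToPoly F n (x : Fin n → F) = 0 :=
      eq_zero_of_dvd_of_degree_lt hdvd hdeg
    exact Subtype.ext (zero_of_wordToPoly_zero hz)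
  calc Module.finrank F (cyclicCode F n h)
      ≤ Module.finrank F (Fin (n - d) → F) :=
        LinearMap.finrank_le_finrank_of_injective hinj
    _ = n - d := by rw [Module.finrank_fintype_fun_eq_card, Fintype.card_fin]

lemma u_mem_span (hα : IsPrimitiveRoot α n) (hn' : (n : K) ≠ 0) {h : F[X]} (hm : h.Monic)
    (hd : h ∣ X ^ n - 1) {a : ZMod n} (ha : aeval (om n α a) h ≠ 0) :
    u n α a ∈ Submodule.span K (iv n '' (cyclicCode F n h : Set (Fin n → F))) := by
  have hpos : 0 < n := Nat.pos_of_ne_zero (NeZero.ne n)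
  set m : F[X] := X ^ n - 1 with hm'
  have hmm : m.Monic := by
    have := monic_X_pow_sub_C (1 : F) (NeZero.ne n)
    simpa [hm'] using this
  have hmdeg : m.degree = (n : ℕ) := by
    have := degree_X_pow_sub_C hpos (1 : F)
    simpa [hm'] using this
  have hdeg : ∀ t : Fin n, ((h * X ^ (t : ℕ)) %ₘ m).degree < (n : ℕ) := by
    intro t
    have := degree_modByMonic_lt (h * X ^ (t : ℕ)) hmm
    rwa [hmdeg] at this
  set w : Fin n → (Fin n → F) := fun t i => ((h * X ^ (t : ℕ)) %ₘ m).coeff (i : ℕ) with hw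
  have hword : ∀ t, wordToPoly F n (w t) = (h * X ^ (t : ℕ)) %ₘ m := fun t =>
    wordToPoly_of_coeff (hdeg t)
  have hwmem : ∀ t, w t ∈ cyclicCode F n h := by
    intro t
    rw [mem_cyclicCode_iff_dvd, hword t, modByMonic_eq_sub_mul_div _ m]
    exact dvd_sub (dvd_mul_right h _) (hd.mul_right _)
  set z : Fin n → K := ∑ t : Fin n, om n α (-(a * ((t : ℕ) : ZMod n))) • iv n (w t) with hz
  have hzmem : z ∈ Submodule.span K (iv n '' (cyclicCode F n h : Set (Fin n → F))) := by
    refine Submodule.sum_mem _ fun t _ => Submodule.smul_mem _ _ (Submodule.subset_span ?_)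
    exact ⟨w t, hwmem t, rfl⟩
  have hmz : ∀ j : ZMod n, aeval (om n α j) m = 0 := by
    intro j
    rw [hm', map_sub, map_one, map_pow, aeval_X, om_pow_n hα, sub_self]
  have htr : ∀ j, tr n α z j = tr n α (aeval (om n α a) h • u n α a) j := by
    intro j
    rw [hz, tr_sum_smul, tr_smul, tr_u hα]
    have hterm : ∀ t : Fin n, tr n α (iv n (w t)) j
        = aeval (om n α j) h * om n α (j * ((t : ℕ) : ZMod n)) := by
      intro t
      rw [tr_iv hα, hword t, modByMonic_eq_sub_mul_div _ m, map_sub]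
      have hzero : (aeval (om n α j)) (m * (h * X ^ (t : ℕ) /ₘ m)) = 0 := by
        rw [map_mul, hmz j, zero_mul]
      rw [hzero, sub_zero, map_mul, map_pow, aeval_X, om_pow hα]
    simp_rw [hterm]
    have hcomb : ∀ t : Fin n,
        om n α (-(a * ((t : ℕ) : ZMod n)))
          * (aeval (om n α j) h * om n α (j * ((t : ℕ) : ZMod n)))
        = aeval (om n α j) h * om n α ((j - a) * ((t : ℕ) : ZMod n)) := by
      intro t
      have hom : om n α (j * ((t : ℕ) : ZMod n)) * om n α (-(a * ((t : ℕ) : ZMod n)))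
          = om n α ((j - a) * ((t : ℕ) : ZMod n)) := by
        rw [← om_add hα]
        congr 1
        ring
      calc om n α (-(a * ((t : ℕ) : ZMod n)))
            * (aeval (om n α j) h * om n α (j * ((t : ℕ) : ZMod n)))
          = aeval (om n α j) h
            * (om n α (j * ((t : ℕ) : ZMod n)) * om n α (-(a * ((t : ℕ) : ZMod n)))) := by ring
        _ = aeval (om n α j) h * om n α ((j - a) * ((t : ℕ) : ZMod n)) := by rw [hom]
    simp_rw [hcomb]
    rw [← Finset.mul_sum, sum_om hα]
    rcases eq_or_ne j a with rfl | hne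
    · simp
    · have h1 : ¬(j - a = 0) := fun hzz => hne (by rwa [sub_eq_zero] at hzz)
      simp [h1, hne]
  have hzeq : z = aeval (om n α a) h • u n α a := tr_injective hα hn' htr
  have hufin : u n α a = (aeval (om n α a) h)⁻¹ • z := by
    rw [hzeq, smul_smul, inv_mul_cancel₀ ha, one_smul]
  rw [hufin]
  exact Submodule.smul_mem _ _ hzmem

lemma finrank_span_iv_le (W : Submodule F (Fin n → F)) :
    Module.finrank K (Submodule.span K ((iv (K := K) n) '' (W : Set (Fin n → F))))
      ≤ Module.finrank F W := by
  classical
  set b := Module.finBasis F W with hb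
  have hsub : iv n '' (W : Set (Fin n → F))
      ⊆ (Submodule.span K (Set.range (fun i => iv (K := K) n ((b i : Fin n → F)))) : Set (Fin n → K)) := by
    rintro _ ⟨w0, hw0, rfl⟩
    have hw2 : w0 = ∑ i, b.repr ⟨w0, hw0⟩ i • ((b i : Fin n → F)) := by
      have h3 := congrArg (Subtype.val) (b.sum_repr ⟨w0, hw0⟩)
      simpa only [Submodule.coe_sum, Submodule.coe_smul] using h3.symm
    have h4 : iv (K := K) n w0
        = ∑ i, algebraMap F K (b.repr ⟨w0, hw0⟩ i) • iv (K := K) n ((b i : Fin n → F)) := by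
      funext x
      have hx : w0 x = ∑ i, (b.repr ⟨w0, hw0⟩) i * ((b i : Fin n → F) x) := by
        conv_lhs => rw [hw2]
        simp [Finset.sum_apply]
      simp only [iv, hx, Finset.sum_apply, map_sum, map_mul, Pi.smul_apply, smul_eq_mul]
    rw [h4]
    exact Submodule.sum_mem _ fun i _ =>
      Submodule.smul_mem _ _ (Submodule.subset_span ⟨i, rfl⟩)
  have hstep1 : Module.finrank K (Submodule.span K (iv n '' (W : Set (Fin n → F))))
      ≤ Module.finrank K (Submodule.span K (Set.range (fun i => iv (K := K) n ((b i : Fin n → F))))) :=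
    Submodule.finrank_mono (Submodule.span_le.mpr hsub)
  have hstep2 := finrank_range_le_card (R := K) (fun i => iv (K := K) n ((b i : Fin n → F)))
  rw [Set.finrank] at hstep2
  exact le_trans hstep1 (le_trans hstep2 (le_of_eq (Fintype.card_fin _)))

lemma linearIndependent_u (hα : IsPrimitiveRoot α n) (hn' : (n : K) ≠ 0)
    (s : Finset (ZMod n)) :
    LinearIndependent K (fun k : s => u n α (k : ZMod n)) := by
  rw [Fintype.linearIndependent_iff]
  intro gc hsum k
  have h1 := congrArg (fun v => tr n α v (k : ZMod n)) hsum
  rw [tr_sum_smul] at h1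
  have h2 : ∀ i : s, gc i * tr n α (u n α (i : ZMod n)) (k : ZMod n)
      = gc i * (if (k : ZMod n) = (i : ZMod n) then (n : K) else 0) := by
    intro i
    rw [tr_u hα]
  rw [Finset.sum_congr rfl fun i _ => h2 i] at h1
  rw [Finset.sum_eq_single_of_mem k (Finset.mem_univ k)] at h1
  · have h3 : tr n α (0 : Fin n → K) (k : ZMod n) = 0 := by simp [tr]
    rw [h3] at h1
    simp at h1
    exact h1.resolve_right hn'
  · intro i _ hne
    have : ¬((k : ZMod n) = (i : ZMod n)) := fun hh => hne (Subtype.ext hh.symm)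
    simp [this]

section FiniteF

variable [Fintype F]

lemma exists_frob :
    ∃ φ : K →+* K, ∀ x : K, φ x = x ^ Fintype.card F := by
  obtain ⟨p, hp⟩ := CharP.exists F
  haveI := hp
  obtain ⟨k, hprime, hcard⟩ := FiniteField.card F p
  haveI : Fact p.Prime := ⟨hprime⟩
  haveI : CharP K p := charP_of_injective_algebraMap (algebraMap F K).injective p
  exact ⟨iterateFrobenius K p k, fun x => by rw [iterateFrobenius_def, hcard]⟩

lemma mem_range_algebraMap_of_pow_card {z : K} (hz : z ^ Fintype.card F = z) :
    z ∈ Set.range (algebraMap F K) := by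
  classical
  set q := Fintype.card F with hq
  have hq1 : 1 < q := Fintype.one_lt_card
  set P : K[X] := X ^ q - X with hP
  have hPne : P ≠ 0 := by
    have hc : P.coeff q = 1 := by
      have hne1 : ¬(1 = q) := fun h => hq1.ne' h.symm
      simp [hP, coeff_X_pow, Polynomial.coeff_X, hne1]
    intro h0
    rw [h0, coeff_zero] at hc
    exact one_ne_zero hc.symm
  have hdeg : P.natDegree ≤ q := by
    refine le_trans (natDegree_sub_le _ _) ?_
    simp only [natDegree_X_pow, natDegree_X]
    exact max_le le_rfl hq1.le
  set A := Finset.univ.image (algebraMap F K) with hA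
  have hAsub : A ⊆ P.roots.toFinset := by
    intro x hx
    obtain ⟨a, -, rfl⟩ := Finset.mem_image.mp hx
    rw [Multiset.mem_toFinset]
    refine mem_roots'.mpr ⟨hPne, ?_⟩
    rw [IsRoot, hP]
    simp only [eval_sub, eval_pow, eval_X, ← map_pow]
    rw [FiniteField.pow_card, sub_self]
  have hcard2 : P.roots.toFinset.card ≤ q :=
    le_trans (Multiset.toFinset_card_le _) (le_trans (card_roots' P) hdeg)
  have hAcard : A.card = q := by
    rw [hA, Finset.card_image_of_injective _ (algebraMap F K).injective, Finset.card_univ]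
  have hAeq : A = P.roots.toFinset :=
    Finset.eq_of_subset_of_card_le hAsub (by rw [hAcard]; exact hcard2)
  have hzroot : z ∈ P.roots.toFinset := by
    rw [Multiset.mem_toFinset]
    refine mem_roots'.mpr ⟨hPne, ?_⟩
    rw [IsRoot, hP]
    simp [hz]
  rw [← hAeq] at hzroot
  obtain ⟨a, -, ha⟩ := Finset.mem_image.mp hzroot
  exact ⟨a, ha⟩

lemma frob_aeval (φ : K →+* K) (hφ : ∀ x : K, φ x = x ^ Fintype.card F)
    (x : K) (h : F[X]) : φ (aeval x h) = aeval (x ^ Fintype.card F) h := by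
  rw [aeval_def, aeval_def, hom_eval₂]
  congr 1
  · ext a
    rw [RingHom.comp_apply, hφ, ← map_pow, FiniteField.pow_card]
  · exact hφ x

end FiniteF

end StarAux


open StarAux in
/-- The star product of two cyclic codes with generating sets `I₁`, `I₂`
is the cyclic code whose generator polynomial is `(xⁿ - 1)/∏_{j ∈ I₁+I₂}(x - αʲ)`;
equivalently, its generating set is the Minkowski sum `I₁ + I₂`. -/
theorem star_product_of_cyclic_codes
    {F K : Type*} [Field F] [Fintype F] [Field K] [Algebra F K]
    (n : ℕ) [NeZero n] (hcop : Nat.Coprime n (Fintype.card F))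
    (α : K) (hα : IsPrimitiveRoot α n)
    (g₁ g₂ : Polynomial F) (hg₁ : g₁.Monic) (hg₂ : g₂.Monic)
    (hdvd₁ : g₁ ∣ X ^ n - 1) (hdvd₂ : g₂ ∣ X ^ n - 1)
    (I₁ I₂ : Set (ZMod n))
    (hI₁ : I₁ = generatingSet n g₁ α) (hI₂ : I₂ = generatingSet n g₂ α)
    (S : Finset (ZMod n)) (hS : (S : Set (ZMod n)) = I₁ + I₂) :
    ∃ g : Polynomial F, g.Monic ∧ g ∣ X ^ n - 1 ∧
      starProd (cyclicCode F n g₁) (cyclicCode F n g₂) = cyclicCode F n g ∧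
      g.map (algebraMap F K) * ∏ j ∈ S, (X - Polynomial.C (α ^ j.val)) = X ^ n - 1 ∧
      generatingSet n g α = I₁ + I₂ := by
  classical
  have hpos : 0 < n := Nat.pos_of_ne_zero (NeZero.ne n)
  set q := Fintype.card F with hq
  -- characteristic facts
  obtain ⟨p, hp⟩ := CharP.exists F
  haveI := hp
  obtain ⟨k, hprime, hcard⟩ := FiniteField.card F p
  haveI : Fact p.Prime := ⟨hprime⟩
  haveI : CharP K p := charP_of_injective_algebraMap (algebraMap F K).injective p
  have hn' : (n : K) ≠ 0 := by
    intro h0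
    have hdvdn := (CharP.cast_eq_zero_iff K p n).mp h0
    have hdq : p ∣ q := by
      rw [hq, hcard]
      exact dvd_pow_self p k.pos.ne'
    have h1 : p ∣ 1 := hcop ▸ Nat.dvd_gcd hdvdn hdq
    exact hprime.one_lt.ne' (Nat.dvd_one.mp h1)
  obtain ⟨φ, hφ⟩ := exists_frob (F := F) (K := K)
  -- generating sets are closed under multiplication by q
  have hclosed : ∀ (h : F[X]) (a : ZMod n), aeval (om n α a) h ≠ 0 →
      aeval (om n α (a * (q : ZMod n))) h ≠ 0 := by
    intro h a ha hz
    apply ha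
    have h1 : aeval (om n α a ^ q) h = 0 := by
      rw [om_pow hα]
      exact hz
    rw [← frob_aeval φ hφ] at h1
    exact (_root_.map_eq_zero φ).mp h1
  have hSq : ∀ s ∈ S, s * (q : ZMod n) ∈ S := by
    intro s hs
    have hs' : s ∈ (S : Set (ZMod n)) := hs
    rw [hS] at hs'
    obtain ⟨a, ha, b, hb, hab⟩ := Set.mem_add.mp hs'
    have ha' : a * (q : ZMod n) ∈ I₁ := by
      rw [hI₁] at ha ⊢
      exact hclosed g₁ a ha
    have hb' : b * (q : ZMod n) ∈ I₂ := by
      rw [hI₂] at hb ⊢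
      exact hclosed g₂ b hb
    have : s * (q : ZMod n) ∈ (S : Set (ZMod n)) := by
      rw [hS, ← hab, add_mul]
      exact Set.add_mem_add ha' hb'
    exact this
  -- multiplication by q is a bijection preserving S and Sᶜ
  have hqunit : IsUnit ((q : ZMod n)) := by
    rw [ZMod.isUnit_iff_coprime]
    exact hcop.symm
  have hinj : Function.Injective (fun j : ZMod n => j * (q : ZMod n)) :=
    fun a b hab => hqunit.mul_right_cancel hab
  have hSimg : S.image (fun j => j * (q : ZMod n)) = S := by
    apply Finset.eq_of_subset_of_card_le
    · intro x hx
      obtain ⟨s, hs, rfl⟩ := Finset.mem_image.mp hx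
      exact hSq s hs
    · rw [Finset.card_image_of_injective _ hinj]
  have hScimg : Sᶜ.image (fun j => j * (q : ZMod n)) = Sᶜ := by
    apply Finset.eq_of_subset_of_card_le
    · intro x hx
      obtain ⟨s, hs, rfl⟩ := Finset.mem_image.mp hx
      rw [Finset.mem_compl] at hs ⊢
      intro hmem
      have : s * (q : ZMod n) ∈ S.image (fun j => j * (q : ZMod n)) := by
        rw [hSimg]
        exact hmem
      obtain ⟨s', hs', heq⟩ := Finset.mem_image.mp this
      exact hs (hinj heq ▸ hs')
    · rw [Finset.card_image_of_injective _ hinj]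
  -- the generator polynomial over K and its descent to F
  set g' : Polynomial K := ∏ j ∈ Sᶜ, (X - C (om n α j)) with hg'
  have hg'monic : g'.Monic := monic_prod_of_monic _ _ fun j _ => monic_X_sub_C _
  have hmapφ : g'.map φ = g' := by
    rw [hg', Polynomial.map_prod]
    have hstep : ∀ j ∈ Sᶜ, (X - C (om n α j)).map φ
        = X - C (om n α (j * (q : ZMod n))) := by
      intro j _
      rw [Polynomial.map_sub, map_X, map_C, hφ, om_pow hα]
    rw [Finset.prod_congr rfl hstep]
    calc ∏ j ∈ Sᶜ, (X - C (om n α (j * (q : ZMod n))))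
        = ∏ j ∈ Sᶜ.image (fun j => j * (q : ZMod n)), (X - C (om n α j)) :=
          (Finset.prod_image (f := fun x => X - C (om n α x)) (fun a _ b _ h => hinj h)).symm
      _ = ∏ j ∈ Sᶜ, (X - C (om n α j)) := by rw [hScimg]
  have hcoeff : ∀ i, g'.coeff i ∈ Set.range (algebraMap F K) := by
    intro i
    apply mem_range_algebraMap_of_pow_card
    have h1 := congrArg (fun pp => Polynomial.coeff pp i) hmapφ
    simp only [Polynomial.coeff_map] at h1
    rw [hφ] at h1
    exact h1
  have hlifts : g' ∈ Polynomial.lifts (algebraMap F K) :=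
    (lifts_iff_coeff_lifts _).mpr hcoeff
  obtain ⟨g, hgmap, hgdeg, hgmonic⟩ := lifts_and_degree_eq_and_monic hlifts hg'monic
  -- basic properties of g
  have hprod : g.map (algebraMap F K) * ∏ j ∈ S, (X - C (om n α j)) = X ^ n - 1 := by
    rw [hgmap, hg', Finset.prod_compl_mul_prod, prod_univ_om hα]
  have hgdvd : g ∣ X ^ n - 1 := by
    rw [← map_dvd_map' (algebraMap F K), hgmap, Polynomial.map_sub, Polynomial.map_pow,
      map_X, Polynomial.map_one, ← prod_univ_om hα, hg']
    exact Finset.prod_dvd_prod_of_subset _ _ _ (Finset.subset_univ Sᶜ)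
  have hgeval : ∀ j : ZMod n, aeval (om n α j) g ≠ 0 ↔ j ∈ S := by
    intro j
    rw [aeval_def, ← eval_map, hgmap, hg', eval_prod, Finset.prod_ne_zero_iff]
    constructor
    · intro hall
      by_contra hjS
      have := hall j (Finset.mem_compl.mpr hjS)
      simp [eval_sub, eval_X, eval_C] at this
    · intro hjS t ht
      simp only [eval_sub, eval_X, eval_C, sub_ne_zero]
      intro heq
      exact (Finset.mem_compl.mp ht) ((om_inj hα heq) ▸ hjS)
  have hgen : generatingSet n g α = (S : Set (ZMod n)) := by
    ext j
    exact hgeval j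
  have hdeg_g : g.natDegree = n - S.card := by
    have h1 : g.natDegree = g'.natDegree := by
      rw [← hgmap]
      exact (hgmonic.natDegree_map _).symm
    have h2 : g'.natDegree = Sᶜ.card := by
      rw [hg', natDegree_prod _ _ (fun j _ => X_sub_C_ne_zero _)]
      simp [natDegree_X_sub_C]
    rw [h1, h2, Finset.card_compl, ZMod.card]
  -- the star product is contained in the code generated by g
  set CD := starProd (cyclicCode F n g₁) (cyclicCode F n g₂) with hCD
  have hCDle : CD ≤ cyclicCode F n g := by
    rw [hCD, starProd, Submodule.span_le]
    rintro v ⟨c, hc, d, hd, rfl⟩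
    rw [SetLike.mem_coe, mem_cyclicCode_iff_vanish hα hgmonic hgdvd]
    intro j hj
    have hjS : j ∉ S := fun hmem => (hgeval j).mpr hmem hj
    have hzsum : (n : K) * tr n α (iv n (fun i => c i * d i)) j = 0 := by
      have hivmul : iv (K := K) n (fun i => c i * d i)
          = (fun i => (iv n c) i * (iv n d) i) := funext fun i => by simp [iv]
      rw [hivmul, tr_mul hα]
      refine Finset.sum_eq_zero fun t _ => ?_
      by_cases h1 : aeval (om n α ((t : ℕ) : ZMod n)) g₁ = 0
      · rw [tr_iv hα, aeval_vanish_of_mem g₁ c hc _ h1, zero_mul]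
      · have h2 : aeval (om n α (j - ((t : ℕ) : ZMod n))) g₂ = 0 := by
          by_contra h2
          apply hjS
          have hj1 : ((t : ℕ) : ZMod n) ∈ I₁ := by
            rw [hI₁]
            exact h1
          have hj2 : j - ((t : ℕ) : ZMod n) ∈ I₂ := by
            rw [hI₂]
            exact h2
          have : j ∈ (S : Set (ZMod n)) := by
            rw [hS]
            have := Set.add_mem_add hj1 hj2
            simpa using this
          exact this
        rw [tr_iv hα (j := j - _), aeval_vanish_of_mem g₂ d hd _ h2, mul_zero]
    rw [tr_iv hα] at hzsum
    exact (mul_eq_zero.mp hzsum).resolve_left hn'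
  -- lower bound on the dimension of the star product
  have hCDge : S.card ≤ Module.finrank F CD := by
    have hindep := linearIndependent_u (n := n) (α := α) hα hn' S
    have hcard : Module.finrank K
        (Submodule.span K (Set.range (fun s : S => u n α (s : ZMod n)))) = S.card := by
      rw [finrank_span_eq_card hindep, Fintype.card_coe]
    have hsubset : ((iv (K := K) n '' (cyclicCode F n g₁ : Set (Fin n → F)))
        * (iv (K := K) n '' (cyclicCode F n g₂ : Set (Fin n → F))))
        ⊆ (iv (K := K) n '' (CD : Set (Fin n → F))) := by
      rintro x hx
      rw [Set.mem_mul] at hx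
      obtain ⟨y, hy, z, hz, rfl⟩ := hx
      obtain ⟨c, hc, rfl⟩ := hy
      obtain ⟨d, hd, rfl⟩ := hz
      refine ⟨fun i => c i * d i, ?_, funext fun i => by simp [iv]⟩
      exact Submodule.subset_span ⟨c, hc, d, hd, rfl⟩
    have huin : ∀ s : ZMod n, s ∈ S →
        u n α s ∈ Submodule.span K (iv (K := K) n '' (CD : Set (Fin n → F))) := by
      intro s hs
      have hs' : s ∈ (S : Set (ZMod n)) := hs
      rw [hS] at hs'
      obtain ⟨a, ha, b, hb, hab⟩ := Set.mem_add.mp hs'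
      have hua : u n α a ∈ Submodule.span K
          (iv (K := K) n '' (cyclicCode F n g₁ : Set (Fin n → F))) := by
        refine u_mem_span hα hn' hg₁ hdvd₁ ?_
        rw [hI₁] at ha
        exact ha
      have hub : u n α b ∈ Submodule.span K
          (iv (K := K) n '' (cyclicCode F n g₂ : Set (Fin n → F))) := by
        refine u_mem_span hα hn' hg₂ hdvd₂ ?_
        rw [hI₂] at hb
        exact hb
      have humul : u n α (a + b) = u n α a * u n α b := by
        funext i
        rw [Pi.mul_apply, u, u, u, ← om_add hα]
        congr 1
        ring
      have hmem := Submodule.mul_mem_mul hua hub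
      rw [Submodule.span_mul_span] at hmem
      rw [← hab, humul]
      exact Submodule.span_mono hsubset hmem
    have hspan_le : Submodule.span K (Set.range (fun s : S => u n α (s : ZMod n)))
        ≤ Submodule.span K (iv (K := K) n '' (CD : Set (Fin n → F))) := by
      rw [Submodule.span_le]
      rintro x ⟨s, rfl⟩
      exact huin s s.2
    calc S.card
        = Module.finrank K
            (Submodule.span K (Set.range (fun s : S => u n α (s : ZMod n)))) := hcard.symm
      _ ≤ Module.finrank K
            (Submodule.span K (iv (K := K) n '' (CD : Set (Fin n → F)))) :=
          Submodule.finrank_mono hspan_le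
      _ ≤ Module.finrank F CD := finrank_span_iv_le CD
  -- upper bound for the code generated by g
  have hEle : Module.finrank F (cyclicCode F n g) ≤ S.card := by
    have h1 := finrank_cyclicCode_le (n := n) g hgmonic
    rw [hdeg_g] at h1
    have h2 : S.card ≤ n := by
      have := Finset.card_le_univ S
      rwa [ZMod.card] at this
    exact le_trans h1 (by omega)
  have hEq : CD = cyclicCode F n g :=
    Submodule.eq_of_le_of_finrank_le hCDle (le_trans hEle hCDge)
  exact ⟨g, hgmonic, hgdvd, hEq, hprod, by rw [hgen, hS]⟩
end
end

section
/- Let q be a prime power, n a positive integer with gcd(n,q)=1, and let C and D be cyclic codes of length n over F_q with generating sets I₁ and I₂. Then the dimension of the star product C⋆D equals the cardinality of the Minkowski sum I₁ + I₂ ⊆ Z/nZ, i.e. dim(C⋆D) = |{i₁ + i₂ mod n : i₁ ∈ I₁, i₂ ∈ I₂}|. -/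
set_option linter.unusedSectionVars false


open Polynomial Pointwise

noncomputable section

section Aux

variable {K : Type*} [Field K] {n : ℕ} [NeZero n] {α : K}

lemma sp_cast_val (a : ZMod n) : ((a.val : ℕ) : ZMod n) = a :=
  ZMod.natCast_rightInverse a

lemma sp_pow_natCast (hα : α ^ n = 1) (a : ℕ) : α ^ ((a : ZMod n)).val = α ^ a := by
  rw [ZMod.val_natCast, ← pow_eq_pow_mod a hα]

lemma sp_pow_add (hα : α ^ n = 1) (a b : ZMod n) :
    α ^ (a + b).val = α ^ a.val * α ^ b.val := by
  rw [← pow_add, ZMod.val_add, ← pow_eq_pow_mod _ hα]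

lemma sp_pow_mul (hα : α ^ n = 1) (a b : ZMod n) :
    α ^ (a * b).val = (α ^ a.val) ^ b.val := by
  have h : a * b = ((a.val * b.val : ℕ) : ZMod n) := by
    rw [Nat.cast_mul, sp_cast_val, sp_cast_val]
  rw [h, sp_pow_natCast hα, pow_mul]

/-- The discrete Fourier transform w.r.t. `α`. -/
def dft (n : ℕ) [NeZero n] (α : K) : (Fin n → K) →ₗ[K] (ZMod n → K) where
  toFun v := fun j => ∑ i : Fin n, v i * α ^ ((((i : ℕ) : ZMod n)) * j).val
  map_add' a b := by
    funext j
    simp [add_mul, Finset.sum_add_distrib]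
  map_smul' r a := by
    funext j
    simp [Finset.mul_sum, mul_assoc]

lemma dft_apply (v : Fin n → K) (j : ZMod n) :
    dft n α v j = ∑ i : Fin n, v i * α ^ ((((i : ℕ) : ZMod n)) * j).val := rfl

lemma dft_eq_eval (hα : α ^ n = 1) (v : Fin n → K) (j : ZMod n) :
    dft n α v j = (wordToPoly K n v).eval (α ^ j.val) := by
  rw [dft_apply, wordToPoly]
  simp only [LinearMap.coe_mk, AddHom.coe_mk, eval_finset_sum, eval_mul, eval_C, eval_pow, eval_X]
  refine Finset.sum_congr rfl fun i _ => ?_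
  rw [sp_pow_mul hα, sp_pow_natCast hα, ← pow_mul, mul_comm ((i : ℕ)) j.val, pow_mul]

/-- Orthogonality of characters. -/
lemma dft_orth (hα : IsPrimitiveRoot α n) (c : ZMod n) :
    ∑ i : Fin n, α ^ ((((i : ℕ) : ZMod n)) * c).val = if c = 0 then (n : K) else 0 := by
  have h1 : α ^ n = 1 := hα.pow_eq_one
  have key : ∀ i : Fin n, α ^ ((((i : ℕ) : ZMod n)) * c).val = (α ^ c.val) ^ (i : ℕ) := by
    intro i
    rw [sp_pow_mul h1, sp_pow_natCast h1, ← pow_mul, mul_comm, pow_mul]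
  simp only [key]
  split_ifs with hc
  · subst hc
    simp [ZMod.val_zero]
  · rw [Fin.sum_univ_eq_sum_range (fun i => (α ^ c.val) ^ i) n]
    have hne : α ^ c.val ≠ 1 := by
      intro h
      apply hc
      have := hα.pow_inj (ZMod.val_lt c) (Nat.pos_of_ne_zero (NeZero.ne n)) ?_
      · exact ZMod.val_injective n (by simpa using this)
      · simpa using h
    rw [geom_sum_eq hne, ← pow_mul, mul_comm, pow_mul, h1, one_pow, sub_self, zero_div]

lemma wordToPoly_coeff' (v : Fin n → K) (k : ℕ) :
    (wordToPoly K n v).coeff k = if h : k < n then v ⟨k, h⟩ else 0 := by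
  rw [wordToPoly]
  simp only [LinearMap.coe_mk, AddHom.coe_mk, finset_sum_coeff, coeff_C_mul, coeff_X_pow]
  split_ifs with h
  · rw [Finset.sum_eq_single (⟨k, h⟩ : Fin n)]
    · simp
    · intro b _ hb
      simp only [mul_ite, mul_one, mul_zero, ite_eq_right_iff]
      intro hbk
      exact absurd (Fin.ext hbk.symm : b = (⟨k, h⟩ : Fin n)) hb
    · simp
  · refine Finset.sum_eq_zero fun i _ => ?_
    simp only [mul_ite, mul_one, mul_zero, ite_eq_right_iff]
    intro hik
    exact absurd (hik ▸ i.isLt) h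

lemma wordToPoly_degree_lt (v : Fin n → K) : (wordToPoly K n v).degree < n := by
  rw [wordToPoly]
  simp only [LinearMap.coe_mk, AddHom.coe_mk]
  refine lt_of_le_of_lt (degree_sum_le _ _) ?_
  rw [Finset.sup_lt_iff (by exact_mod_cast WithBot.bot_lt_coe n)]
  intro i _
  exact lt_of_le_of_lt (degree_C_mul_X_pow_le _ _) (by exact_mod_cast i.isLt)

lemma wordToPoly_of_coeff (P : Polynomial K) (h : P.degree < n) :
    wordToPoly K n (fun i => P.coeff i) = P := by
  ext k
  rw [wordToPoly_coeff']
  split_ifs with hk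
  · rfl
  · exact (coeff_eq_zero_of_degree_lt (lt_of_lt_of_le h (by exact_mod_cast not_lt.mp hk))).symm

lemma dft_injective (hα : IsPrimitiveRoot α n) : Function.Injective (dft n α) := by
  classical
  have hn : 0 < n := Nat.pos_of_ne_zero (NeZero.ne n)
  rw [injective_iff_map_eq_zero]
  intro v hv
  have hP : wordToPoly K n v = 0 := by
    by_contra hP0
    have hroots : (Finset.univ.image fun j : ZMod n => α ^ j.val) ⊆
        (wordToPoly K n v).roots.toFinset := by
      intro x hx
      simp only [Finset.mem_image, Finset.mem_univ, true_and] at hx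
      obtain ⟨j, rfl⟩ := hx
      rw [Multiset.mem_toFinset, mem_roots hP0]
      have := congrFun hv j
      rw [dft_eq_eval hα.pow_eq_one] at this
      exact this
    have hcard : (Finset.univ.image fun j : ZMod n => α ^ j.val).card = n := by
      rw [Finset.card_image_of_injective _ ?_, Finset.card_univ, ZMod.card]
      intro a b hab
      exact ZMod.val_injective n (hα.pow_inj (ZMod.val_lt a) (ZMod.val_lt b) hab)
    have h1 := Finset.card_le_card hroots
    rw [hcard] at h1
    have h2 := (wordToPoly K n v).roots.toFinset_card_le
    have h3 := card_roots' (wordToPoly K n v)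
    have h4 : (wordToPoly K n v).natDegree < n :=
      natDegree_lt_iff_degree_lt hP0 |>.mpr (wordToPoly_degree_lt v)
    omega
  funext i
  have := congrArg (fun P => Polynomial.coeff P (i : ℕ)) hP
  simpa [wordToPoly_coeff'] using this

/-- The inverse-character vector `u_j = (α^{-ij})_i`. -/
def uvec (n : ℕ) [NeZero n] (α : K) (j : ZMod n) : Fin n → K :=
  fun i => α ^ (-(j * ((i : ℕ) : ZMod n))).val

lemma uvec_mul (hα : α ^ n = 1) (j k : ZMod n) :
    uvec n α j * uvec n α k = uvec n α (j + k) := by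
  funext i
  show uvec n α j i * uvec n α k i = _
  rw [uvec, uvec, uvec, ← sp_pow_add hα]
  congr 1
  rw [show -(j * ((i : ℕ) : ZMod n)) + -(k * ((i : ℕ) : ZMod n))
      = -((j + k) * ((i : ℕ) : ZMod n)) by ring]

lemma dft_uvec (hα : IsPrimitiveRoot α n) (j : ZMod n) :
    dft n α (uvec n α j) = Pi.single j (n : K) := by
  classical
  funext m
  rw [dft_apply]
  have key : ∀ i : Fin n, uvec n α j i * α ^ ((((i : ℕ) : ZMod n)) * m).val
      = α ^ ((((i : ℕ) : ZMod n)) * (m - j)).val := by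
    intro i
    rw [uvec, ← sp_pow_add hα.pow_eq_one]
    congr 1
    rw [show -(j * ((i : ℕ) : ZMod n)) + ((i : ℕ) : ZMod n) * m
        = ((i : ℕ) : ZMod n) * (m - j) by ring]
  simp only [key]
  rw [dft_orth hα (m - j), Pi.single_apply]
  congr 1
  rw [sub_eq_zero]

lemma pow_val_injective (hα : IsPrimitiveRoot α n) :
    Function.Injective (fun m : ZMod n => α ^ m.val) := fun a b hab =>
  ZMod.val_injective n (hα.pow_inj (ZMod.val_lt a) (ZMod.val_lt b) hab)

lemma X_pow_sub_one_eq (hα : IsPrimitiveRoot α n) :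
    (X ^ n - 1 : Polynomial K) = ∏ m : ZMod n, (X - C (α ^ m.val)) := by
  classical
  have hn : n ≠ 0 := NeZero.ne n
  have hdvd : (∏ m : ZMod n, (X - C (α ^ m.val))) ∣ (X ^ n - 1 : Polynomial K) := by
    apply Finset.prod_dvd_of_coprime
    · exact (pairwise_coprime_X_sub_C (pow_val_injective hα)).set_pairwise _
    · intro m _
      rw [dvd_iff_isRoot, IsRoot, eval_sub, eval_pow, eval_X, eval_one,
        ← pow_mul, mul_comm, pow_mul, hα.pow_eq_one, one_pow, sub_self]
  refine eq_of_monic_of_dvd_of_natDegree_le ?_ ?_ hdvd ?_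
  · exact monic_prod_of_monic _ _ fun m _ => monic_X_sub_C _
  · simpa using monic_X_pow_sub_C (1 : K) hn
  · rw [natDegree_prod _ _ fun m _ => X_sub_C_ne_zero _]
    simp only [natDegree_X_sub_C, Finset.sum_const, Finset.card_univ, ZMod.card, smul_eq_mul,
      mul_one]
    have h2 : (X ^ n - 1 : Polynomial K) = X ^ n - C 1 := by rw [map_one]
    exact le_of_eq (by rw [h2, natDegree_X_pow_sub_C])

lemma dvd_of_vanishing (hα : IsPrimitiveRoot α n) {g' P : Polynomial K}
    (hg : g' ∣ X ^ n - 1)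
    (hvan : ∀ m : ZMod n, g'.eval (α ^ m.val) = 0 → P.eval (α ^ m.val) = 0) :
    g' ∣ P := by
  classical
  set Iset : Finset (ZMod n) := Finset.univ.filter (fun m => g'.eval (α ^ m.val) ≠ 0) with hIset
  set h : Polynomial K := ∏ m ∈ Iset, (X - C (α ^ m.val)) with hh
  have hXn : (X ^ n - 1 : Polynomial K) ∣ P * h := by
    rw [X_pow_sub_one_eq hα]
    apply Finset.prod_dvd_of_coprime
    · exact (pairwise_coprime_X_sub_C (pow_val_injective hα)).set_pairwise _
    · intro m _
      rcases eq_or_ne (g'.eval (α ^ m.val)) 0 with h0 | h0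
      · exact Dvd.dvd.mul_right (dvd_iff_isRoot.mpr (hvan m h0)) h
      · refine Dvd.dvd.mul_left ?_ P
        exact Finset.dvd_prod_of_mem _ (by simp [hIset, h0])
  have hcop : IsCoprime g' h := by
    refine IsCoprime.prod_right fun m hm => ?_
    have hnd : ¬ (X - C (α ^ m.val)) ∣ g' := by
      rw [dvd_iff_isRoot]
      simpa [hIset] using (Finset.mem_filter.mp hm).2
    exact ((irreducible_X_sub_C _).coprime_iff_not_dvd.mpr hnd).symm
  exact hcop.dvd_of_dvd_mul_right (dvd_trans hg hXn)

end Aux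

lemma mem_cyclicCode {F : Type*} [Field F] {n : ℕ} {g : Polynomial F} {v : Fin n → F} :
    v ∈ cyclicCode F n g ↔ g ∣ wordToPoly F n v := by
  rw [cyclicCode, Submodule.mem_comap, Submodule.restrictScalars_mem,
    Ideal.mem_span_singleton]

section FK

variable {F K : Type*} [Field F] [Field K] [Algebra F K] {n : ℕ} [NeZero n] {α : K}

lemma map_dvd_X_pow_sub_one {g : Polynomial F} (hdvd : g ∣ X ^ n - 1) :
    g.map (algebraMap F K) ∣ (X ^ n - 1 : Polynomial K) := by
  have := Polynomial.map_dvd (algebraMap F K) hdvd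
  simpa using this

lemma eval_map_eq_aeval (g : Polynomial F) (x : K) :
    (g.map (algebraMap F K)).eval x = Polynomial.aeval x g := by
  rw [Polynomial.aeval_def, Polynomial.eval_map]

lemma spec_zero (hα : IsPrimitiveRoot α n) {g : Polynomial F} {v : Fin n → K}
    (hv : v ∈ cyclicCode K n (g.map (algebraMap F K))) {m : ZMod n}
    (hm : m ∉ generatingSet n g α) : dft n α v m = 0 := by
  rw [mem_cyclicCode] at hv
  obtain ⟨u, hu⟩ := hv
  rw [dft_eq_eval hα.pow_eq_one, hu, eval_mul]
  have h0 : (g.map (algebraMap F K)).eval (α ^ m.val) = 0 := by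
    rw [eval_map_eq_aeval]
    simpa [generatingSet] using hm
  rw [h0, zero_mul]

lemma uvec_mem (hα : IsPrimitiveRoot α n) {g : Polynomial F} (hdvd : g ∣ X ^ n - 1)
    {j : ZMod n} (hj : j ∈ generatingSet n g α) :
    uvec n α j ∈ cyclicCode K n (g.map (algebraMap F K)) := by
  rw [mem_cyclicCode]
  refine dvd_of_vanishing hα (map_dvd_X_pow_sub_one hdvd) fun m hm => ?_
  rw [← dft_eq_eval hα.pow_eq_one, dft_uvec hα, Pi.single_apply]
  rw [if_neg]
  intro hmj
  subst hmj
  rw [eval_map_eq_aeval] at hm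
  exact hj hm

lemma cyclicCode_eq_span_uvec (hα : IsPrimitiveRoot α n) (hnK : (n : K) ≠ 0)
    {g : Polynomial F} (hdvd : g ∣ X ^ n - 1) :
    cyclicCode K n (g.map (algebraMap F K)) =
      Submodule.span K (uvec n α '' generatingSet n g α) := by
  classical
  refine le_antisymm ?_ (Submodule.span_le.mpr ?_)
  · intro v hv
    have hfin : (generatingSet n g α).Finite := Set.toFinite _
    set Ifin := hfin.toFinset with hIfin
    have hveq : v = ∑ j ∈ Ifin, ((n : K)⁻¹ * dft n α v j) • uvec n α j := by
      apply dft_injective hα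
      rw [map_sum]
      funext m
      rw [Finset.sum_apply]
      have hterm : ∀ j ∈ Ifin,
          (dft n α (((n : K)⁻¹ * dft n α v j) • uvec n α j)) m
            = if m = j then dft n α v j else 0 := by
        intro j _
        rw [map_smul, Pi.smul_apply, dft_uvec hα, Pi.single_apply, smul_eq_mul]
        split_ifs with hmj
        · subst hmj
          field_simp
        · rw [mul_zero]
      rw [Finset.sum_congr rfl hterm]
      rw [Finset.sum_ite_eq Ifin m (fun j => dft n α v j)]
      by_cases hm : m ∈ Ifin
      · rw [if_pos hm]
      · rw [if_neg hm]
        refine spec_zero hα hv fun hmem => hm ?_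
        rw [hIfin, Set.Finite.mem_toFinset]
        exact hmem
    rw [hveq]
    refine Submodule.sum_mem _ fun j hj => Submodule.smul_mem _ _ ?_
    exact Submodule.subset_span ⟨j, by simpa [hIfin] using hj, rfl⟩
  · rintro x ⟨j, hj, rfl⟩
    exact uvec_mem hα hdvd hj

end FK

section FK2

variable {F K : Type*} [Field F] [Field K] [Algebra F K] {n : ℕ} [NeZero n] {α : K}

lemma linearIndependent_uvec (hα : IsPrimitiveRoot α n) (hnK : (n : K) ≠ 0)
    (T : Set (ZMod n)) :
    LinearIndependent K (fun t : T => uvec n α (t : ZMod n)) := by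
  classical
  have hT : Fintype T := (Set.toFinite T).fintype
  apply LinearIndependent.of_comp (dft n α)
  have heq : (⇑(dft n α) ∘ fun t : T => uvec n α (t : ZMod n))
      = fun t : T => Pi.single (t : ZMod n) (n : K) := by
    funext t
    exact dft_uvec hα (t : ZMod n)
  rw [heq, Fintype.linearIndependent_iff]
  intro gc hg t0
  have h0 := congrFun hg (t0 : ZMod n)
  simp only [Finset.sum_apply, Pi.smul_apply, Pi.single_apply, smul_eq_mul, Pi.zero_apply,
    Subtype.coe_inj, mul_ite, mul_zero] at h0
  rw [Finset.sum_ite_eq Finset.univ t0 (fun t => gc t * (n : K))] at h0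
  simp only [Finset.mem_univ, if_true] at h0
  exact (mul_eq_zero.mp h0).resolve_right hnK

lemma finrank_span_uvec (hα : IsPrimitiveRoot α n) (hnK : (n : K) ≠ 0)
    (T : Set (ZMod n)) :
    Module.finrank K (Submodule.span K (uvec n α '' T)) = T.ncard := by
  classical
  have hT : Fintype T := (Set.toFinite T).fintype
  rw [Set.image_eq_range, finrank_span_eq_card (linearIndependent_uvec hα hnK T),
    ← Nat.card_eq_fintype_card, Nat.card_coe_set_eq]

open Pointwise in
lemma code_mul_code (hα : IsPrimitiveRoot α n) (hnK : (n : K) ≠ 0)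
    {g₁ g₂ : Polynomial F} (h1 : g₁ ∣ X ^ n - 1) (h2 : g₂ ∣ X ^ n - 1) :
    cyclicCode K n (g₁.map (algebraMap F K)) * cyclicCode K n (g₂.map (algebraMap F K))
      = Submodule.span K
          (uvec n α '' (generatingSet n g₁ α + generatingSet n g₂ α)) := by
  rw [cyclicCode_eq_span_uvec hα hnK h1, cyclicCode_eq_span_uvec hα hnK h2,
    Submodule.span_mul_span]
  congr 1
  ext x
  simp only [Set.mem_mul, Set.mem_image, Set.mem_add]
  constructor
  · rintro ⟨a, ⟨j₁, hj₁, rfl⟩, b, ⟨j₂, hj₂, rfl⟩, rfl⟩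
    exact ⟨j₁ + j₂, ⟨j₁, hj₁, j₂, hj₂, rfl⟩, (uvec_mul hα.pow_eq_one j₁ j₂).symm⟩
  · rintro ⟨s, ⟨j₁, hj₁, j₂, hj₂, rfl⟩, rfl⟩
    exact ⟨uvec n α j₁, ⟨j₁, hj₁, rfl⟩, uvec n α j₂, ⟨j₂, hj₂, rfl⟩,
      uvec_mul hα.pow_eq_one j₁ j₂⟩

end FK2

section BC

variable {F K : Type*} [Field F] [Field K] [Algebra F K] {m : ℕ}

lemma linearIndependent_emb {r : ℕ} {v : Fin r → (Fin m → F)}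
    (hv : LinearIndependent F v) :
    LinearIndependent K (fun s : Fin r => (fun i => algebraMap F K (v s i))) := by
  classical
  let A0 : Matrix (Fin m) (Fin r) F := fun i s => v s i
  let φ : (Fin r → F) →ₗ[F] (Fin m → F) := Matrix.toLin' A0
  have hφ_single : ∀ s, φ (Pi.single s 1) = v s := by
    intro s
    funext i
    rw [show φ (Pi.single s 1) = A0.mulVec (Pi.single s 1) from Matrix.toLin'_apply A0 _]
    simp [Matrix.mulVec, dotProduct, A0, Pi.single_apply]
  have hker : LinearMap.ker φ = ⊥ := by
    rw [LinearMap.ker_eq_bot']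
    intro x hx
    have hx' : ∑ s, x s • v s = 0 := by
      funext i
      have := congrFun hx i
      rw [show φ x = A0.mulVec x from Matrix.toLin'_apply A0 x] at this
      simpa [φ, Matrix.toLin'_apply, Matrix.mulVec, dotProduct, A0,
        Finset.sum_apply, mul_comm] using this
    funext s
    exact Fintype.linearIndependent_iff.mp hv x hx' s
  obtain ⟨ψ, hψ⟩ := φ.exists_leftInverse_of_injective hker
  set A : Matrix (Fin r) (Fin m) F := LinearMap.toMatrix' ψ with hA
  have hψ_eq : ∀ y, ψ y = A.mulVec y := by
    intro y
    rw [hA, ← Matrix.toLin'_apply, Matrix.toLin'_toMatrix']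
  set B : Matrix (Fin r) (Fin m) K := A.map (algebraMap F K) with hB
  have hkey : ∀ y : Fin m → F,
      Matrix.toLin' B (fun i => algebraMap F K (y i)) = fun s => algebraMap F K (ψ y s) := by
    intro y
    funext t
    rw [Matrix.toLin'_apply, hψ_eq]
    simp only [Matrix.mulVec, dotProduct, hB, Matrix.map_apply, map_sum, map_mul]
  rw [Fintype.linearIndependent_iff]
  intro gc hg s0
  have h0 := congrArg (Matrix.toLin' B) hg
  rw [map_sum, map_zero] at h0
  have h1 : ∀ s, Matrix.toLin' B (gc s • fun i => algebraMap F K (v s i))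
      = gc s • (Pi.single s (1 : K) : Fin r → K) := by
    intro s
    rw [map_smul, hkey (v s)]
    congr 1
    have : ψ (v s) = Pi.single s 1 := by
      rw [← hφ_single s]
      exact congrFun (congrArg (fun (f : _ →ₗ[F] _) => f.toFun) hψ) (Pi.single s 1)
    rw [this]
    funext t
    rcases eq_or_ne t s with rfl | hts
    · simp
    · simp [Pi.single_apply, hts]
  rw [Finset.sum_congr rfl (fun s _ => h1 s)] at h0
  have h2 := congrFun h0 s0
  simpa [Finset.sum_apply, Pi.single_apply, Finset.sum_ite_eq] using h2

lemma finrank_span_emb (W : Submodule F (Fin m → F)) :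
    Module.finrank K (Submodule.span K
      ((fun c : Fin m → F => fun i => algebraMap F K (c i)) '' (W : Set (Fin m → F))))
      = Module.finrank F W := by
  classical
  set r := Module.finrank F W with hr
  let b : Module.Basis (Fin r) F W := Module.finBasis F W
  let v : Fin r → (Fin m → F) := fun s => (b s : Fin m → F)
  have hv : LinearIndependent F v := b.linearIndependent.map' W.subtype W.ker_subtype
  have hspan : Submodule.span K
      ((fun c : Fin m → F => fun i => algebraMap F K (c i)) '' (W : Set (Fin m → F)))
      = Submodule.span K (Set.range fun s : Fin r => (fun i => algebraMap F K (v s i))) := by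
    apply le_antisymm
    · rw [Submodule.span_le]
      rintro x ⟨w, hw, rfl⟩
      set c : Fin r → F := fun s => b.repr ⟨w, hw⟩ s with hc
      have hrepr : ∑ s, c s • b s = (⟨w, hw⟩ : W) := b.sum_repr ⟨w, hw⟩
      have hw' : w = ∑ s, c s • v s := by
        have := congrArg (Subtype.val : W → (Fin m → F)) hrepr
        simpa [v] using this.symm
      have hιw : (fun i => algebraMap F K (w i))
          = ∑ s, (algebraMap F K) (c s) • (fun i => algebraMap F K (v s i)) := by
        funext i
        rw [hw']
        simp [Finset.sum_apply, Pi.smul_apply, smul_eq_mul, map_sum, map_mul, Algebra.smul_def]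
      have hmem : (fun i => algebraMap F K (w i)) ∈ Submodule.span K
          (Set.range fun s : Fin r => (fun i => algebraMap F K (v s i))) := by
        rw [hιw]
        exact Submodule.sum_mem _ fun s _ =>
          Submodule.smul_mem _ _ (Submodule.subset_span ⟨s, rfl⟩)
      exact hmem
    · rw [Submodule.span_le]
      rintro x ⟨s, rfl⟩
      exact Submodule.subset_span ⟨v s, (b s).2, rfl⟩
  rw [hspan]
  have hcard := finrank_span_eq_card (R := K) (linearIndependent_emb hv)
  rw [hcard, Fintype.card_fin]

end BC

section Glue

variable {F K : Type*} [Field F] [Field K] [Algebra F K] {n : ℕ} [NeZero n] {α : K}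

lemma wordToPoly_coeff (v : Fin n → K) (i : Fin n) :
    (wordToPoly K n v).coeff (i : ℕ) = v i := by
  rw [wordToPoly_coeff', dif_pos i.isLt]

lemma wordToPoly_emb (c : Fin n → F) :
    wordToPoly K n (fun i => algebraMap F K (c i))
      = (wordToPoly F n c).map (algebraMap F K) := by
  rw [wordToPoly, wordToPoly]
  simp only [LinearMap.coe_mk, AddHom.coe_mk, Polynomial.map_sum, Polynomial.map_mul,
    Polynomial.map_pow, map_C, map_X]

lemma span_image_code (hα : IsPrimitiveRoot α n) {g : Polynomial F}
    (hdvd : g ∣ X ^ n - 1) :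
    Submodule.span K ((fun c : Fin n → F => fun i => algebraMap F K (c i)) ''
        (cyclicCode F n g : Set (Fin n → F)))
      = cyclicCode K n (g.map (algebraMap F K)) := by
  classical
  have hg0 : g ≠ 0 := by
    rintro rfl
    exact (Monic.ne_zero (monic_X_pow_sub_C (1 : F) (NeZero.ne n))
      (by simpa using zero_dvd_iff.mp hdvd))
  have hg0' : g.map (algebraMap F K) ≠ 0 := by
    simpa using (Polynomial.map_ne_zero_iff (algebraMap F K).injective).mpr hg0
  apply le_antisymm
  · rw [Submodule.span_le]
    rintro x ⟨c, hc, rfl⟩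
    rw [SetLike.mem_coe, mem_cyclicCode]
    have hdc : g ∣ wordToPoly F n c := mem_cyclicCode.mp hc
    rw [wordToPoly_emb]
    exact Polynomial.map_dvd _ hdc
  · intro v hv
    rw [mem_cyclicCode] at hv
    obtain ⟨u, hu⟩ := hv
    by_cases hP0 : wordToPoly K n v = 0
    · have hv0 : v = 0 := by
        funext i
        have := wordToPoly_coeff v i
        rw [hP0, coeff_zero] at this
        exact this.symm
      rw [hv0]
      exact Submodule.zero_mem _
    have hu0 : u ≠ 0 := by
      rintro rfl
      rw [mul_zero] at hu
      exact hP0 hu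
    have hdegP : (wordToPoly K n v).natDegree < n :=
      (natDegree_lt_iff_degree_lt hP0).mpr (wordToPoly_degree_lt v)
    have hdegsum : (wordToPoly K n v).natDegree
        = g.natDegree + u.natDegree := by
      rw [hu, natDegree_mul hg0' hu0,
        natDegree_map_eq_of_injective (algebraMap F K).injective]
    set w : ℕ → (Fin n → F) := fun t => fun i => (X ^ t * g).coeff (i : ℕ) with hw
    have hdeg_t : ∀ t ∈ u.support, (X ^ t * g : Polynomial F).degree < (n : WithBot ℕ) := by
      intro t ht
      have ht' : t ≤ u.natDegree := le_natDegree_of_mem_supp t ht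
      have hne : (X ^ t * g : Polynomial F) ≠ 0 := mul_ne_zero (pow_ne_zero _ X_ne_zero) hg0
      rw [← natDegree_lt_iff_degree_lt hne, natDegree_mul (pow_ne_zero _ X_ne_zero) hg0,
        natDegree_X_pow]
      omega
    have hwmem : ∀ t ∈ u.support, w t ∈ cyclicCode F n g := by
      intro t ht
      rw [mem_cyclicCode]
      have : wordToPoly F n (w t) = X ^ t * g := wordToPoly_of_coeff _ (hdeg_t t ht)
      rw [this]
      exact Dvd.intro_left _ rfl
    have hvsum : v = ∑ t ∈ u.support, u.coeff t •
        (fun i => algebraMap F K (w t i)) := by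
      funext i
      have h1 : v i = (wordToPoly K n v).coeff (i : ℕ) := (wordToPoly_coeff v i).symm
      have h2 : wordToPoly K n v = ∑ t ∈ u.support, u.coeff t •
          (X ^ t * g.map (algebraMap F K)) := by
        rw [hu, mul_comm]
        conv_lhs => rw [u.as_sum_support]
        rw [Finset.sum_mul]
        refine Finset.sum_congr rfl fun t _ => ?_
        rw [← C_mul_X_pow_eq_monomial, mul_assoc, ← smul_eq_C_mul]
      rw [h1, h2, finset_sum_coeff]
      rw [Finset.sum_apply]
      refine Finset.sum_congr rfl fun t ht => ?_
      rw [coeff_smul, Pi.smul_apply, smul_eq_mul, smul_eq_mul]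
      congr 1
      have : ((X ^ t * g : Polynomial F).map (algebraMap F K))
          = X ^ t * g.map (algebraMap F K) := by
        rw [Polynomial.map_mul, Polynomial.map_pow, map_X]
      rw [← this, coeff_map]
    rw [hvsum]
    refine Submodule.sum_mem _ fun t ht => Submodule.smul_mem _ _ ?_
    exact Submodule.subset_span ⟨w t, hwmem t ht, rfl⟩

end Glue

/-- The dimension of the star product of two cyclic codes with
generating sets `I₁`, `I₂` equals the cardinality of the Minkowski sum `I₁ + I₂ ⊆ ℤ/nℤ`. -/
theorem dim_star_product_eq_ncard_minkowski_sum
    {F K : Type*} [Field F] [Fintype F] [Field K] [Algebra F K]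
    (n : ℕ) [NeZero n] (hcop : Nat.Coprime n (Fintype.card F))
    (α : K) (hα : IsPrimitiveRoot α n)
    (g₁ g₂ : Polynomial F) (hg₁ : g₁.Monic) (hg₂ : g₂.Monic)
    (hdvd₁ : g₁ ∣ X ^ n - 1) (hdvd₂ : g₂ ∣ X ^ n - 1)
    (I₁ I₂ : Set (ZMod n))
    (hI₁ : I₁ = generatingSet n g₁ α) (hI₂ : I₂ = generatingSet n g₂ α) :
    Module.finrank F ↥(starProd (cyclicCode F n g₁) (cyclicCode F n g₂)) =
      (I₁ + I₂).ncard := by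
  classical
  subst hI₁ hI₂
  have hnK : (n : K) ≠ 0 := by
    intro h0
    have hnF : (n : F) = 0 := by
      apply (algebraMap F K).injective
      rw [map_natCast, map_zero, h0]
    set p := ringChar F with hp
    haveI : CharP F p := ringChar.charP F
    obtain ⟨k, hprime, hcard⟩ := FiniteField.card F p
    have hpn : p ∣ n := (CharP.cast_eq_zero_iff F p n).mp hnF
    have hpcard : p ∣ Fintype.card F := by
      rw [hcard]
      exact dvd_pow_self p (PNat.ne_zero k)
    have hgcd := Nat.dvd_gcd hpn hpcard
    rw [Nat.Coprime] at hcop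
    rw [hcop] at hgcd
    exact hprime.one_lt.ne' (Nat.dvd_one.mp hgcd)
  have e1 := finrank_span_emb (K := K) (starProd (cyclicCode F n g₁) (cyclicCode F n g₂))
  rw [← e1]
  have e2 : Submodule.span K ((fun c : Fin n → F => fun i => algebraMap F K (c i)) ''
        ((starProd (cyclicCode F n g₁) (cyclicCode F n g₂)) : Set (Fin n → F)))
      = Submodule.span K ((fun c : Fin n → F => fun i => algebraMap F K (c i)) ''
        {v | ∃ c ∈ cyclicCode F n g₁, ∃ d ∈ cyclicCode F n g₂, v = fun i => c i * d i}) := by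
    apply le_antisymm
    · rw [Submodule.span_le]
      rintro x ⟨wv, hwv, rfl⟩
      have key : ∀ wv ∈ starProd (cyclicCode F n g₁) (cyclicCode F n g₂),
          (fun i => algebraMap F K (wv i)) ∈ Submodule.span K
            ((fun c : Fin n → F => fun i => algebraMap F K (c i)) ''
              {v | ∃ c ∈ cyclicCode F n g₁, ∃ d ∈ cyclicCode F n g₂,
                v = fun i => c i * d i}) := by
        intro wv hwv
        induction hwv using Submodule.span_induction with
        | mem x hx => exact Submodule.subset_span ⟨x, hx, rfl⟩
        | zero =>
          have h0 : (fun i : Fin n => algebraMap F K ((0 : Fin n → F) i)) = 0 := by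
            funext i; simp
          rw [h0]; exact Submodule.zero_mem _
        | add x y hx hy ihx ihy =>
          have hxy : (fun i => algebraMap F K ((x + y) i))
              = (fun i => algebraMap F K (x i)) + (fun i => algebraMap F K (y i)) := by
            funext i; simp
          rw [hxy]; exact Submodule.add_mem _ ihx ihy
        | smul a x hx ih =>
          have hax : (fun i => algebraMap F K ((a • x) i))
              = algebraMap F K a • (fun i => algebraMap F K (x i)) := by
            funext i; simp [Algebra.smul_def]
          rw [hax]; exact Submodule.smul_mem _ _ ih
      exact key wv hwv
    · exact Submodule.span_mono (Set.image_mono Submodule.subset_span)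
  rw [e2]
  have e3 : ((fun c : Fin n → F => fun i => algebraMap F K (c i)) ''
        {v | ∃ c ∈ cyclicCode F n g₁, ∃ d ∈ cyclicCode F n g₂, v = fun i => c i * d i})
      = ((fun c : Fin n → F => fun i => algebraMap F K (c i)) ''
          (cyclicCode F n g₁ : Set (Fin n → F)))
        * ((fun c : Fin n → F => fun i => algebraMap F K (c i)) ''
          (cyclicCode F n g₂ : Set (Fin n → F))) := by
    ext x
    constructor
    · rintro ⟨v, ⟨c, hc, d, hd, rfl⟩, rfl⟩
      refine ⟨_, ⟨c, hc, rfl⟩, _, ⟨d, hd, rfl⟩, ?_⟩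
      funext i
      simp
    · rintro ⟨a, ⟨c, hc, rfl⟩, b, ⟨d, hd, rfl⟩, rfl⟩
      refine ⟨fun i => c i * d i, ⟨c, hc, d, hd, rfl⟩, ?_⟩
      funext i
      simp
  rw [e3, ← Submodule.span_mul_span, span_image_code hα hdvd₁, span_image_code hα hdvd₂,
    code_mul_code hα hnK hdvd₁ hdvd₂, finrank_span_uvec hα hnK]
end
end

section
/- Let q be a prime power, n a positive integer with gcd(n,q)=1, K an extension field of F_q over which xⁿ−1 splits into linear factors, and α ∈ K a primitive n-th root of unity. For M ⊆ Z/nZ let B(M) = {(f(α⁰), f(α¹), …, f(α^{n−1})) : f ∈ K[x], f = Σ_{i∈M} f_i x^i}. If C is a cyclic code of length n over F_q with generating set I, then C equals the subfield subcode B(−I) ∩ F_qⁿ, where −I denotes the set of additive inverses in Z/nZ of the elements of I. -/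
open Polynomial Pointwise

noncomputable section

/-- For `M ⊆ ℤ/nℤ`, the `K`-code
`B(M) = {(f(α⁰), f(α¹), …, f(α^{n-1})) : f = ∑_{i ∈ M} fᵢ xⁱ ∈ K[x]}`,
where the exponents of `f` are the representatives in `{0,…,n-1}` of elements of `M`. -/
def evalCode {K : Type*} [Field K] (n : ℕ) [NeZero n] (α : K) (M : Set (ZMod n)) :
    Set (Fin n → K) :=
  {v | ∃ f : Polynomial K,
    (∀ i : ℕ, f.coeff i ≠ 0 → i < n ∧ ((i : ZMod n) ∈ M)) ∧
    ∀ j : Fin n, v j = f.eval (α ^ (j : ℕ))}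

set_option linter.unusedSectionVars false

section CCHelpers

variable {K : Type*} [Field K] {n : ℕ} [NeZero n] {α : K}

theorem pow_mod' (hα : IsPrimitiveRoot α n) (a : ℕ) : α ^ (a % n) = α ^ a := by
  conv_rhs => rw [← Nat.div_add_mod a n]
  rw [pow_add, pow_mul, hα.pow_eq_one, one_pow, one_mul]

theorem pow_modeq (hα : IsPrimitiveRoot α n) {a b : ℕ} (h : a ≡ b [MOD n]) :
    α ^ a = α ^ b := by
  rw [← pow_mod' hα a, ← pow_mod' hα b, h]

theorem pow_modeq' (hα : IsPrimitiveRoot α n) {a b : ℕ} (h : (a : ZMod n) = (b : ZMod n)) :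
    α ^ a = α ^ b :=
  pow_modeq hα ((ZMod.natCast_eq_natCast_iff _ _ _).1 h)

theorem orth (hα : IsPrimitiveRoot α n) (N : ℕ) :
    ∑ j : Fin n, α ^ ((j : ℕ) * N) = if (N : ZMod n) = 0 then (n : K) else 0 := by
  have hcast : ((N : ZMod n) = 0) ↔ n ∣ N := ZMod.natCast_eq_zero_iff _ _
  have key : ∀ j : Fin n, α ^ ((j : ℕ) * N) = (α ^ N) ^ (j : ℕ) := fun j => by
    rw [mul_comm, pow_mul]
  split_ifs with h
  · have h1 : α ^ N = 1 := (hα.pow_eq_one_iff_dvd N).2 (hcast.1 h)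
    simp [key, h1]
  · have hne : α ^ N ≠ 1 := fun hone => h (hcast.2 ((hα.pow_eq_one_iff_dvd N).1 hone))
    calc ∑ j : Fin n, α ^ ((j : ℕ) * N) = ∑ j ∈ Finset.range n, (α ^ N) ^ j := by
          rw [Finset.sum_range fun j => (α ^ N) ^ j]
          exact Finset.sum_congr rfl fun j _ => key j
      _ = ((α ^ N) ^ n - 1) / (α ^ N - 1) := geom_sum_eq hne n
      _ = 0 := by
          rw [← pow_mul, mul_comm, pow_mul, hα.pow_eq_one, one_pow]; simp

theorem natCast_fin_injOn {a b : Fin n} (h : ((a : ℕ) : ZMod n) = ((b : ℕ) : ZMod n)) :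
    a = b := by
  have := congrArg ZMod.val h
  rwa [ZMod.val_cast_of_lt a.2, ZMod.val_cast_of_lt b.2, ← Fin.ext_iff] at this

theorem castnm1 : (((n - 1 : ℕ)) : ZMod n) = -1 := by
  have h1 : (1:ℕ) ≤ n := Nat.one_le_iff_ne_zero.2 (NeZero.ne n)
  rw [Nat.cast_sub h1, ZMod.natCast_self, Nat.cast_one, zero_sub]

theorem inversion (hα : IsPrimitiveRoot α n) (hn : (n : K) ≠ 0) (v : Fin n → K) (j : Fin n) :
    (n : K)⁻¹ * ∑ k : Fin n,
      (∑ m : Fin n, v m * α ^ ((k : ℕ) * (m : ℕ))) * α ^ ((j : ℕ) * ((-((k : ℕ) : ZMod n)).val)) =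
      v j := by
  have key : ∀ k m : Fin n,
      α ^ ((k : ℕ) * (m : ℕ)) * α ^ ((j : ℕ) * ((-((k : ℕ) : ZMod n)).val))
        = α ^ ((k : ℕ) * ((m : ℕ) + (j : ℕ) * (n - 1))) := by
    intro k m
    rw [← pow_add]
    apply pow_modeq' hα
    push_cast
    rw [ZMod.natCast_val, ZMod.cast_id, castnm1]
    ring
  have step : ∀ k : Fin n,
      (∑ m : Fin n, v m * α ^ ((k : ℕ) * (m : ℕ))) * α ^ ((j : ℕ) * ((-((k : ℕ) : ZMod n)).val))
        = ∑ m : Fin n, v m * α ^ ((k : ℕ) * ((m : ℕ) + (j : ℕ) * (n - 1))) := by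
    intro k
    rw [Finset.sum_mul]
    exact Finset.sum_congr rfl fun m _ => by rw [mul_assoc, key k m]
  simp only [step]
  rw [Finset.sum_comm]
  have inner : ∀ m : Fin n,
      ∑ k : Fin n, v m * α ^ ((k : ℕ) * ((m : ℕ) + (j : ℕ) * (n - 1)))
        = v m * (if m = j then (n : K) else 0) := by
    intro m
    rw [← Finset.mul_sum, orth hα]
    congr 1
    have : ((((m : ℕ) + (j : ℕ) * (n - 1)) : ℕ) : ZMod n) = ((m : ℕ) : ZMod n) - ((j : ℕ) : ZMod n) := by
      push_cast
      rw [castnm1]; ring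
    rw [this]
    by_cases h : m = j
    · simp [h]
    · rw [if_neg h, if_neg]
      intro hc
      exact h (natCast_fin_injOn (by linear_combination hc))
  simp only [inner, mul_ite, mul_zero]
  rw [Finset.sum_ite_eq' Finset.univ j fun m => v m * (n:K)]
  simp only [Finset.mem_univ, if_true]
  field_simp

variable {F : Type*} [Field F] [Algebra F K]

theorem dvd_iff_vanishing (hα : IsPrimitiveRoot α n) (hn : (n : K) ≠ 0)
    (hsplit : Polynomial.Splits ((X ^ n - 1 : Polynomial F).map (algebraMap F K)))
    {g : Polynomial F} (hg : g.Monic) (hdvd : g ∣ X ^ n - 1) (c : Polynomial F) :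
    g ∣ c ↔ ∀ k : Fin n, aeval (α ^ (k : ℕ)) g = 0 → aeval (α ^ (k : ℕ)) c = 0 := by
  have hnpos : 0 < n := Nat.pos_of_ne_zero (NeZero.ne n)
  constructor
  · rintro ⟨h, rfl⟩ k hk
    simp [map_mul, hk]
  · intro H
    by_cases hc : c = 0
    · simp [hc]
    have hXnF : (X ^ n - 1 : Polynomial F) ≠ 0 := by
      rw [← Polynomial.C_1]
      exact X_pow_sub_C_ne_zero hnpos 1
    set gK := g.map (algebraMap F K) with hgK
    set cK := c.map (algebraMap F K) with hcK
    have hcKne : cK ≠ 0 := by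
      simpa [hcK, Polynomial.map_eq_zero] using hc
    have hgKmon : gK.Monic := hg.map _
    have hsg : Splits gK :=
      hsplit.of_dvd (Polynomial.map_ne_zero hXnF) (Polynomial.map_dvd _ hdvd)
    have hmapXn : (X ^ n - 1 : Polynomial F).map (algebraMap F K) = X ^ n - 1 := by
      simp
    have hdvdK : gK ∣ (X ^ n - 1 : Polynomial K) := by
      rw [← hmapXn]
      exact Polynomial.map_dvd _ hdvd
    have hXnK : (X ^ n - 1 : Polynomial K) ≠ 0 := by
      rw [← Polynomial.C_1]
      exact X_pow_sub_C_ne_zero hnpos 1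
    have hrootsle : gK.roots ≤ (X ^ n - 1 : Polynomial K).roots :=
      roots.le_of_dvd hXnK hdvdK
    have hXnroots_nodup : (X ^ n - 1 : Polynomial K).roots.Nodup := by
      have := hα.nthRoots_nodup (one_ne_zero (α := K))
      rwa [nthRoots, Polynomial.C_1] at this
    have hgnodup : gK.roots.Nodup := Multiset.nodup_of_le hrootsle hXnroots_nodup
    have hsubset : gK.roots ⊆ cK.roots := by
      intro r hr
      have hrXn : r ∈ (X ^ n - 1 : Polynomial K).roots := Multiset.mem_of_le hrootsle hr
      have hrn : r ^ n = 1 := by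
        have : r ∈ nthRoots n (1 : K) := by rwa [nthRoots, Polynomial.C_1]
        exact (mem_nthRoots hnpos).1 this
      obtain ⟨i, hi, rfl⟩ := hα.eq_pow_of_pow_eq_one hrn
      have hgr : aeval (α ^ i) g = 0 := by
        have := (mem_roots hgKmon.ne_zero).1 hr
        rwa [IsRoot.def, hgK, eval_map, ← aeval_def] at this
      have hcr : aeval (α ^ i) c = 0 := H ⟨i, hi⟩ hgr
      rw [mem_roots hcKne, IsRoot.def, hcK, eval_map, ← aeval_def]
      exact hcr
    have hle : gK.roots ≤ cK.roots := (Multiset.le_iff_subset hgnodup).2 hsubset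
    have hdvdcK : gK ∣ cK := by
      calc gK = (gK.roots.map fun a => X - Polynomial.C a).prod :=
            hsg.eq_prod_roots_of_monic hgKmon
        _ ∣ cK := (Multiset.prod_X_sub_C_dvd_iff_le_roots hcKne _).2 hle
    exact (map_dvd_map (algebraMap F K) (algebraMap F K).injective hg).1 hdvdcK

end CCHelpers

/-- (Delsarte-type description) A cyclic code `C` over `F` with
generating set `I` equals the subfield subcode `B(-I) ∩ Fⁿ`, where `Fⁿ` is embedded
into `Kⁿ` coordinatewise via the algebra map. -/
theorem cyclic_code_eq_subfield_subcode
    {F K : Type*} [Field F] [Fintype F] [Field K] [Algebra F K]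
    (n : ℕ) [NeZero n] (hcop : Nat.Coprime n (Fintype.card F))
    (hsplit : Polynomial.Splits ((X ^ n - 1 : Polynomial F).map (algebraMap F K)))
    (α : K) (hα : IsPrimitiveRoot α n)
    (g : Polynomial F) (hg : g.Monic) (hdvd : g ∣ X ^ n - 1)
    (I : Set (ZMod n)) (hI : I = generatingSet n g α) :
    (fun (c : Fin n → F) (j : Fin n) => algebraMap F K (c j)) '' (cyclicCode F n g) =
      evalCode n α (-I) ∩ {v | ∀ j : Fin n, v j ∈ Set.range (algebraMap F K)} := by
  subst hI
  have hnpos : 0 < n := Nat.pos_of_ne_zero (NeZero.ne n)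
  have hnF : (n : F) ≠ 0 := by
    intro h
    have hchar : ringChar F ∣ n := (CharP.cast_eq_zero_iff F (ringChar F) n).1 h
    have hcard : ringChar F ∣ Fintype.card F :=
      (CharP.cast_eq_zero_iff F (ringChar F) _).1 (FiniteField.cast_card_eq_zero F)
    have h1 : ringChar F ∣ 1 := hcop ▸ Nat.dvd_gcd hchar hcard
    exact CharP.ringChar_ne_one (Nat.dvd_one.1 h1)
  have hnK : (n : K) ≠ 0 := by
    intro h
    apply hnF
    apply (algebraMap F K).injective
    rw [map_natCast, map_zero]
    exact h
  have hPeval : ∀ (c : Fin n → F) (k : ℕ),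
      aeval (α ^ k) (wordToPoly F n c) =
        ∑ m : Fin n, algebraMap F K (c m) * α ^ (k * (m : ℕ)) := by
    intro c k
    show aeval (α ^ k) (∑ i : Fin n, Polynomial.C (c i) * X ^ (i : ℕ)) = _
    rw [map_sum]
    exact Finset.sum_congr rfl fun m _ => by rw [map_mul, aeval_C, map_pow, aeval_X, ← pow_mul]
  ext v
  simp only [Set.mem_image, Set.mem_inter_iff, Set.mem_setOf_eq, SetLike.mem_coe]
  constructor
  · rintro ⟨c, hcmem, rfl⟩
    have hgdvd : g ∣ wordToPoly F n c := by
      have : wordToPoly F n c ∈ Ideal.span {g} := hcmem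
      exact Ideal.mem_span_singleton.1 this
    refine ⟨?_, fun j => ⟨c j, rfl⟩⟩
    set w : Fin n → K := fun k => aeval (α ^ (k : ℕ)) (wordToPoly F n c) with hw
    refine ⟨Polynomial.C ((n : K)⁻¹) *
      ∑ k : Fin n, Polynomial.C (w k) * X ^ ((-(((k : ℕ)) : ZMod n)).val), ?_, ?_⟩
    · intro i hi
      rw [coeff_C_mul, finset_sum_coeff] at hi
      simp only [coeff_C_mul, coeff_X_pow] at hi
      have hex : ∃ k : Fin n, i = (-(((k : ℕ)) : ZMod n)).val ∧ w k ≠ 0 := by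
        by_contra hno
        push_neg at hno
        apply hi
        rw [Finset.sum_eq_zero, mul_zero]
        intro k _
        by_cases h : i = (-(((k : ℕ)) : ZMod n)).val
        · rw [if_pos h, mul_one, hno k h]
        · rw [if_neg h, mul_zero]
      obtain ⟨k, hik, hwk⟩ := hex
      constructor
      · rw [hik]; exact ZMod.val_lt _
      · rw [Set.mem_neg]
        have hizm : ((i : ℕ) : ZMod n) = -(((k : ℕ)) : ZMod n) := by
          rw [hik, ZMod.natCast_val, ZMod.cast_id]
        rw [hizm, neg_neg]
        show aeval (α ^ ((((k : ℕ)) : ZMod n)).val) g ≠ 0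
        rw [ZMod.val_cast_of_lt k.2]
        intro hg0
        apply hwk
        obtain ⟨t, ht⟩ := hgdvd
        show aeval (α ^ ((k : Fin n) : ℕ)) (wordToPoly F n c) = 0
        rw [ht, map_mul, hg0, zero_mul]
    · intro j
      have heval : Polynomial.eval (α ^ (j : ℕ))
          (Polynomial.C ((n : K)⁻¹) *
            ∑ k : Fin n, Polynomial.C (w k) * X ^ ((-(((k : ℕ)) : ZMod n)).val)) =
          (n : K)⁻¹ * ∑ k : Fin n,
            (∑ m : Fin n, algebraMap F K (c m) * α ^ ((k : ℕ) * (m : ℕ))) *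
              α ^ ((j : ℕ) * ((-(((k : ℕ)) : ZMod n)).val)) := by
        rw [eval_mul, eval_C, eval_finset_sum]
        congr 1
        refine Finset.sum_congr rfl fun k _ => ?_
        rw [eval_mul, eval_C, eval_pow, eval_X, ← pow_mul]
        simp only [hw]
        rw [hPeval c (k : ℕ)]
      rw [heval, inversion hα hnK (fun m => algebraMap F K (c m)) j]
  · rintro ⟨⟨f, hfcoeff, hfeval⟩, hrange⟩
    choose c hc using hrange
    refine ⟨c, ?_, funext fun j => hc j⟩
    show wordToPoly F n c ∈ Ideal.span {g}
    rw [Ideal.mem_span_singleton]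
    rw [dvd_iff_vanishing hα hnK hsplit hg hdvd]
    intro k hk
    have hdeg : f.natDegree < n := by
      by_cases hf0 : f = 0
      · simp [hf0, hnpos]
      · exact (hfcoeff f.natDegree (Polynomial.leadingCoeff_ne_zero.2 hf0)).1
    have hveval : ∀ m : Fin n, algebraMap F K (c m) =
        ∑ i ∈ Finset.range n, f.coeff i * α ^ ((m : ℕ) * i) := by
      intro m
      rw [hc m, hfeval m, Polynomial.eval_eq_sum_range' hdeg]
      exact Finset.sum_congr rfl fun i _ => by rw [← pow_mul]
    calc aeval (α ^ (k : ℕ)) (wordToPoly F n c)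
        = ∑ m : Fin n, algebraMap F K (c m) * α ^ ((k : ℕ) * (m : ℕ)) := hPeval c (k : ℕ)
      _ = ∑ m : Fin n, ∑ i ∈ Finset.range n,
            f.coeff i * α ^ ((m : ℕ) * (i + (k : ℕ))) := by
          refine Finset.sum_congr rfl fun m _ => ?_
          rw [hveval m, Finset.sum_mul]
          refine Finset.sum_congr rfl fun i _ => ?_
          rw [mul_assoc, ← pow_add]
          congr 2
          ring
      _ = ∑ i ∈ Finset.range n, ∑ m : Fin n,
            f.coeff i * α ^ ((m : ℕ) * (i + (k : ℕ))) := Finset.sum_comm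
      _ = ∑ i ∈ Finset.range n, f.coeff i *
            (if (((i + (k : ℕ)) : ℕ) : ZMod n) = 0 then (n : K) else 0) := by
          refine Finset.sum_congr rfl fun i _ => ?_
          rw [← Finset.mul_sum, orth hα]
      _ = 0 := by
          refine Finset.sum_eq_zero fun i _ => ?_
          by_cases hfi : f.coeff i = 0
          · rw [hfi, zero_mul]
          · rw [if_neg, mul_zero]
            intro hzero
            have hmem := (hfcoeff i hfi).2
            rw [Set.mem_neg] at hmem
            have hik : -((i : ℕ) : ZMod n) = (((k : ℕ)) : ZMod n) := by
              push_cast at hzero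
              linear_combination -hzero
            rw [hik] at hmem
            apply hmem
            show aeval (α ^ (((k : ℕ) : ZMod n)).val) g = 0
            rw [ZMod.val_cast_of_lt k.2]
            exact hk
end
end

section
/- For nonnegative integers r₁, r₂, m with r₁ + r₂ ≤ m, the star product of binary Reed-Muller codes satisfies RM(r₁,m) ⋆ RM(r₂,m) = RM(r₁+r₂, m). -/
open Polynomial Pointwise

noncomputable section

/-- The binary Reed-Muller code `RM(r,m)`: evaluations at all points of `F₂^m`
of the multivariate polynomials over `F₂` of total degree at most `r`. -/
def RM (r m : ℕ) : Submodule (ZMod 2) ((Fin m → ZMod 2) → ZMod 2) where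
  carrier := {v | ∃ f : MvPolynomial (Fin m) (ZMod 2),
    f.totalDegree ≤ r ∧ v = fun x => MvPolynomial.eval x f}
  zero_mem' := ⟨0, by simp, by funext x; simp⟩
  add_mem' := by
    rintro a b ⟨f, hf, rfl⟩ ⟨g, hg, rfl⟩
    exact ⟨f + g, le_trans (MvPolynomial.totalDegree_add f g) (max_le hf hg),
      by funext x; simp⟩
  smul_mem' := by
    rintro c v ⟨f, hf, rfl⟩
    exact ⟨c • f, le_trans (MvPolynomial.totalDegree_smul_le c f) hf,
      by funext x; simp [MvPolynomial.smul_eval]⟩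

lemma split_finsupp {m : ℕ} (a b : ℕ) (s : Fin m →₀ ℕ)
    (hs : (s.sum fun _ n => n) ≤ a + b) :
    ∃ s₁ s₂ : Fin m →₀ ℕ, s = s₁ + s₂ ∧ (s₁.sum fun _ n => n) ≤ a ∧
      (s₂.sum fun _ n => n) ≤ b := by
  induction a generalizing s with
  | zero => exact ⟨0, s, by simp, by simp, by simpa using hs⟩
  | succ a ih =>
    by_cases h' : (s.sum fun _ n => n) ≤ a + b
    · obtain ⟨s₁, s₂, h1, h2, h3⟩ := ih s h'
      exact ⟨s₁, s₂, h1, h2.trans (Nat.le_succ a), h3⟩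
    · have hne : s ≠ 0 := by rintro rfl; simp at h'
      obtain ⟨i, hi⟩ : ∃ i, s i ≠ 0 := by
        by_contra hc
        push_neg at hc
        exact hne (Finsupp.ext fun i => hc i)
      obtain ⟨s', rfl⟩ : ∃ s', s = s' + Finsupp.single i 1 := by
        refine ⟨s - Finsupp.single i 1, ?_⟩
        ext j
        by_cases hj : j = i
        · subst hj; simp [Nat.sub_add_cancel (Nat.one_le_iff_ne_zero.2 hi)]
        · simp [Finsupp.single_apply, Ne.symm hj]
      have hsum : ∀ t : Fin m →₀ ℕ,
          ((t + Finsupp.single i 1).sum fun _ n => n) = (t.sum fun _ n => n) + 1 := by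
        intro t
        rw [Finsupp.sum_add_index' (fun _ => rfl) (fun _ _ _ => rfl)]
        simp
      rw [hsum] at hs
      obtain ⟨s₁, s₂, h1, h2, h3⟩ := ih s' (by omega)
      refine ⟨s₁ + Finsupp.single i 1, s₂, by rw [h1]; abel, ?_, h3⟩
      rw [hsum]; omega

/-- For `r₁ + r₂ ≤ m`, the star product of binary Reed-Muller codes
satisfies `RM(r₁,m) ⋆ RM(r₂,m) = RM(r₁+r₂,m)`. -/
theorem starProd_RM (r₁ r₂ m : ℕ) (h : r₁ + r₂ ≤ m) :
    starProd (RM r₁ m) (RM r₂ m) = RM (r₁ + r₂) m := by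
  apply le_antisymm
  · rw [starProd, Submodule.span_le]
    rintro v ⟨c, ⟨f, hf, rfl⟩, d, ⟨g, hg, rfl⟩, rfl⟩
    exact ⟨f * g, (MvPolynomial.totalDegree_mul f g).trans (add_le_add hf hg),
      by funext x; simp⟩
  · rintro v ⟨f, hf, rfl⟩
    have : (fun x => MvPolynomial.eval x f) =
        ∑ s ∈ f.support, fun x : Fin m → ZMod 2 =>
          MvPolynomial.eval x (MvPolynomial.monomial s (MvPolynomial.coeff s f)) := by
      funext x
      rw [Finset.sum_apply]
      rw [← map_sum (MvPolynomial.eval x), MvPolynomial.support_sum_monomial_coeff]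
    rw [this]
    refine Submodule.sum_mem _ fun s hs => ?_
    have hdeg : (s.sum fun _ n => n) ≤ r₁ + r₂ := by
      refine le_trans ?_ hf
      exact MvPolynomial.le_totalDegree hs
    obtain ⟨s₁, s₂, rfl, h1, h2⟩ := split_finsupp r₁ r₂ s hdeg
    apply Submodule.subset_span
    refine ⟨fun x => MvPolynomial.eval x
        (MvPolynomial.monomial s₁ (MvPolynomial.coeff (s₁ + s₂) f)), ?_,
      fun x => MvPolynomial.eval x (MvPolynomial.monomial s₂ (1 : ZMod 2)), ?_, ?_⟩
    · exact ⟨_, (MvPolynomial.totalDegree_monomial_le _ _).trans h1, rfl⟩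
    · exact ⟨_, (MvPolynomial.totalDegree_monomial_le _ _).trans h2, rfl⟩
    · funext x
      rw [← map_mul]
      congr 1
      rw [MvPolynomial.monomial_mul, mul_one]
end
end

section
/- Let m ≥ 1, n = 2^m − 1, and let α be a primitive element of F_{2^m}. Order the nonzero points of F₂^m ≅ F_{2^m} as α⁰, α¹, …, α^{n−1}. With this coordinate ordering, the code C^• obtained by puncturing the binary Reed-Muller code RM(r,m) at the coordinate of the evaluation point 0 is a cyclic code of length n, and likewise the shortened code C_• at that position is cyclic. -/
open Polynomial

noncomputable section

/-- A code of length `n` is cyclic if it is closed under the cyclic shift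
`(c₀,…,c_{n-1}) ↦ (c_{n-1},c₀,…,c_{n-2})`. -/
def IsCyclicCode {F : Type*} [Field F] {n : ℕ} [NeZero n]
    (C : Submodule F (Fin n → F)) : Prop :=
  ∀ c ∈ C, (fun i : Fin n => c (i - 1)) ∈ C

lemma totalDegree_bind₁_le_aux {σ : Type*} {R : Type*} [CommSemiring R]
    (P : σ → MvPolynomial σ R) (hP : ∀ i, (P i).totalDegree ≤ 1)
    (f : MvPolynomial σ R) :
    (MvPolynomial.bind₁ P f).totalDegree ≤ f.totalDegree := by
  conv_lhs => rw [f.as_sum]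
  rw [map_sum]
  refine (MvPolynomial.totalDegree_finset_sum _ _).trans (Finset.sup_le fun d hd => ?_)
  refine le_trans ?_ (MvPolynomial.le_totalDegree hd)
  rw [← MvPolynomial.aeval_eq_bind₁, MvPolynomial.aeval_monomial]
  refine (MvPolynomial.totalDegree_mul _ _).trans ?_
  rw [MvPolynomial.algebraMap_eq, MvPolynomial.totalDegree_C, zero_add, Finsupp.prod]
  refine (MvPolynomial.totalDegree_finset_prod _ _).trans ?_
  calc ∑ i ∈ d.support, (P i ^ d i).totalDegree
      ≤ ∑ i ∈ d.support, d i := Finset.sum_le_sum fun i _ =>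
        (MvPolynomial.totalDegree_pow _ _).trans
          (by simpa using Nat.mul_le_mul_left (d i) (hP i))
    _ = d.sum fun _ e => e := rfl

lemma RM_comp_linear {r m : ℕ} (T : (Fin m → ZMod 2) →ₗ[ZMod 2] (Fin m → ZMod 2))
    {v : (Fin m → ZMod 2) → ZMod 2} (hv : v ∈ RM r m) :
    (fun x => v (T x)) ∈ RM r m := by
  classical
  obtain ⟨f, hf, rfl⟩ := hv
  set P : Fin m → MvPolynomial (Fin m) (ZMod 2) :=
    fun k => ∑ j, MvPolynomial.C (T (Pi.single j 1) k) * MvPolynomial.X j with hPdef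
  have hPdeg : ∀ k, (P k).totalDegree ≤ 1 := by
    intro k
    refine (MvPolynomial.totalDegree_finset_sum _ _).trans (Finset.sup_le fun j _ => ?_)
    refine (MvPolynomial.totalDegree_mul _ _).trans ?_
    simp [MvPolynomial.totalDegree_X]
  have hEval : ∀ x k, MvPolynomial.eval x (P k) = T x k := by
    intro x k
    have hx : T x = ∑ j, x j • T (Pi.single j 1) := by
      conv_lhs => rw [← Finset.univ_sum_single x]
      rw [map_sum]
      refine Finset.sum_congr rfl fun j _ => ?_
      rw [← map_smul, ← Pi.single_smul, smul_eq_mul, mul_one]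
    simp [hPdef, hx, Finset.sum_apply, smul_eq_mul, mul_comm]
  refine ⟨MvPolynomial.bind₁ P f, (totalDegree_bind₁_le_aux P hPdeg f).trans hf, ?_⟩
  funext x
  have := MvPolynomial.eval₂Hom_bind₁ (RingHom.id (ZMod 2)) x P f
  simpa [hEval] using this.symm

/-- Identify `F₂^m` with the field `F_{2^m}` via an `F₂`-linear
isomorphism `e`, let `α` be a primitive element of `F_{2^m}`, and order the nonzero
points as `α⁰, α¹, …, α^{n-1}` where `n = 2^m - 1`.  With this ordering, the code
obtained by puncturing `RM(r,m)` at the coordinate of the evaluation point `0` is a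
cyclic code of length `n`, and likewise the code obtained by shortening at that
position is cyclic. -/
theorem punctured_and_shortened_RM_isCyclic
    (m : ℕ) (hm : 1 ≤ m) (r : ℕ) (n : ℕ) [NeZero n] (hn : n = 2 ^ m - 1)
    (K : Type*) [Field K] [Algebra (ZMod 2) K]
    (e : (Fin m → ZMod 2) ≃ₗ[ZMod 2] K)
    (α : K) (hα : IsPrimitiveRoot α n) :
    IsCyclicCode (Submodule.map
      (LinearMap.funLeft (ZMod 2) (ZMod 2)
        (fun j : Fin n => e.symm (α ^ (j : ℕ))))
      (RM r m)) ∧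
    IsCyclicCode (Submodule.map
      (LinearMap.funLeft (ZMod 2) (ZMod 2)
        (fun j : Fin n => e.symm (α ^ (j : ℕ))))
      (RM r m ⊓ LinearMap.ker (LinearMap.proj (0 : Fin m → ZMod 2)))) := by
  classical
  -- the power identity
  have hNe : (n : ℕ) ≠ 0 := NeZero.ne n
  have hpowmod : ∀ x : ℕ, α ^ (x % n) = α ^ x := by
    intro x
    conv_rhs => rw [← Nat.div_add_mod x n, pow_add, pow_mul, hα.pow_eq_one, one_pow, one_mul]
  have hβ : ∀ i : Fin n, α ^ ((i - 1 : Fin n) : ℕ) = α ^ (n - 1 % n) * α ^ (i : ℕ) := by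
    intro i
    rw [Fin.sub_def]
    show α ^ (((n - ((1 : Fin n) : ℕ)) + (i : ℕ)) % n) = _
    rw [hpowmod, pow_add, Fin.val_one']
  set β : K := α ^ (n - 1 % n) with hβdef
  -- the linear map implementing multiplication by β
  set T : (Fin m → ZMod 2) →ₗ[ZMod 2] (Fin m → ZMod 2) :=
    e.symm.toLinearMap ∘ₗ (LinearMap.mulLeft (ZMod 2) β) ∘ₗ e.toLinearMap with hT
  have hTphi : ∀ i : Fin n, e.symm (α ^ ((i - 1 : Fin n) : ℕ)) = T (e.symm (α ^ (i : ℕ))) := by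
    intro i
    simp [hT, hβ i, LinearMap.mulLeft_apply]
  constructor
  · rintro c ⟨v, hv, rfl⟩
    refine ⟨fun x => v (T x), RM_comp_linear T hv, ?_⟩
    funext i
    simp [LinearMap.funLeft_apply, hTphi i]
  · rintro c ⟨v, ⟨hv, hv0⟩, rfl⟩
    refine ⟨fun x => v (T x), ⟨RM_comp_linear T hv, ?_⟩, ?_⟩
    · have : T 0 = 0 := map_zero T
      simpa [LinearMap.mem_ker, this] using hv0
    · funext i
      simp [LinearMap.funLeft_apply, hTphi i]
end
end
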